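/- arXiv:2603.18651 — 7 statements merged into one kernel-verified Lean document; each statement's English description precedes it below -/
import Mathlib

section
/- Let ABC be a triangle and M the midpoint of the arc BAC of its circumcircle (the arc BC containing A). Then M is equidistant from B, C, and the excenter J_c of ABC opposite vertex C; in particular MB = MC = MJ_c. -/
open EuclideanGeometry Metric AffineSubspace Real RealInnerProductSpace

noncomputable section

/-- The Euclidean plane. -/
abbrev Pt := EuclideanSpace ℝ (Fin 2)

/-- The line through two points. -/
def lineTh (A B : Pt) : AffineSubspace ℝ Pt := affineSpan ℝ {A, B}

/-- The circle with center `O` and radius `r` is tangent to the line `AB` at the point `E`. -/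
def TangentAt (O : Pt) (r : ℝ) (A B E : Pt) : Prop :=
  E ∈ lineTh A B ∧ dist O E = r ∧ ∀ Q ∈ lineTh A B, r ≤ dist O Q

/-- `I` is the incenter of triangle `ABC`: it lies strictly inside the triangle and is
equidistant from the three side lines. -/
def IsIncenter (I A B C : Pt) : Prop :=
  (lineTh B C).SSameSide I A ∧ (lineTh C A).SSameSide I B ∧ (lineTh A B).SSameSide I C ∧
  infDist I (lineTh B C : Set Pt) = infDist I (lineTh C A : Set Pt) ∧
  infDist I (lineTh C A : Set Pt) = infDist I (lineTh A B : Set Pt)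

/-- `J` is the excenter of triangle `ABC` opposite the vertex `C`. -/
def IsExcenterC (J A B C : Pt) : Prop :=
  (lineTh A B).SOppSide J C ∧ (lineTh C B).SSameSide J A ∧ (lineTh C A).SSameSide J B ∧
  infDist J (lineTh B C : Set Pt) = infDist J (lineTh C A : Set Pt) ∧
  infDist J (lineTh C A : Set Pt) = infDist J (lineTh A B : Set Pt)

/-!
The excenter `J` opposite `C` has signed distances `(r, r, -r)` to the sides `BC`, `CA`, `AB`, so by
Cramer's rule it is the barycentric combination `(a A + b B - c C) / (a + b - c)`. Writing
`(a + b - c) (M - J) = a (M - A) + b (M - B) - c (M - C)` and expanding, a point `M` with `MB = MC`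
satisfies `MJ = MC` as soon as `MB² - MA² = b c`. For the midpoint of the arc `BAC` this is a
computation in Cartesian coordinates with `B` at the origin and `C` on the first axis; the side
condition on `M` selects the correct square root.
-/

namespace Pt

def orient (A B P : Pt) : ℝ := (B 0 - A 0) * (P 1 - A 1) - (B 1 - A 1) * (P 0 - A 0)

def cross (u v : Pt) : ℝ := u 0 * v 1 - u 1 * v 0

lemma dist_sq_eq_coord (P Q : Pt) : dist P Q ^ 2 = (P 0 - Q 0) ^ 2 + (P 1 - Q 1) ^ 2 := by
  simp [EuclideanSpace.dist_sq_eq, Fin.sum_univ_two, Real.dist_eq, sq_abs]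

lemma ext_coord {P Q : Pt} (h0 : P 0 = Q 0) (h1 : P 1 = Q 1) : P = Q := by
  ext i; fin_cases i <;> assumption

lemma lineMap_apply_coord (A B : Pt) (t : ℝ) (i : Fin 2) :
    AffineMap.lineMap A B t i = A i + t * (B i - A i) := by
  simp [AffineMap.lineMap_apply_module']; ring

lemma orient_swap (A B P : Pt) : orient B A P = -orient A B P := by unfold orient; ring

lemma orient_rotate (A B C : Pt) : orient B C A = orient A B C := by unfold orient; ring

lemma orient_add_orient_add_orient (A B C P : Pt) :
    orient B C P + orient C A P + orient A B P = orient A B C := by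
  unfold orient; ring

/-- Cramer's rule: the orientations of `P` against the sides are its barycentric coordinates. -/
lemma orient_smul_eq (A B C P : Pt) :
    orient A B C • P = orient B C P • A + orient C A P • B + orient A B P • C := by
  apply ext_coord <;> simp only [PiLp.add_apply, PiLp.smul_apply, smul_eq_mul, orient] <;> ring

lemma cross_smul_right (u v : Pt) (r : ℝ) : cross u (r • v) = r * cross u v := by
  simp only [cross, PiLp.smul_apply, smul_eq_mul]; ring

lemma orient_eq_cross_of_mem {A B P p : Pt} (hp : p ∈ lineTh A B) :
    orient A B P = cross (B -ᵥ A) (P -ᵥ p) := by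
  obtain ⟨t, rfl⟩ := mem_affineSpan_pair_iff_exists_lineMap_eq.mp hp
  simp only [orient, cross, vsub_eq_sub, PiLp.sub_apply, lineMap_apply_coord]; ring

def footParam (A B P : Pt) : ℝ :=
  ((P 0 - A 0) * (B 0 - A 0) + (P 1 - A 1) * (B 1 - A 1)) / dist A B ^ 2

lemma orient_ne_zero_of_notMem {A B P : Pt} (hAB : A ≠ B) (h : P ∉ lineTh A B) :
    orient A B P ≠ 0 := by
  intro h0
  have hd : (A 0 - B 0) ^ 2 + (A 1 - B 1) ^ 2 ≠ 0 := by
    rw [← dist_sq_eq_coord]; exact pow_ne_zero 2 (dist_ne_zero.mpr hAB)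
  refine h (mem_affineSpan_pair_iff_exists_lineMap_eq.mpr ⟨footParam A B P, ?_⟩)
  unfold orient at h0
  apply ext_coord <;> simp only [lineMap_apply_coord, footParam, dist_sq_eq_coord] <;> field_simp
  · linear_combination (B 1 - A 1) * h0
  · linear_combination (A 0 - B 0) * h0

lemma infDist_lineTh {A B P : Pt} (hAB : A ≠ B) :
    infDist P (lineTh A B : Set Pt) = |orient A B P| / dist A B := by
  have hd : 0 < dist A B := dist_pos.mpr hAB
  refine le_antisymm ?_ ((le_infDist ⟨A, left_mem_affineSpan_pair ℝ A B⟩).mpr fun Q hQ => ?_)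
  · refine (infDist_le_dist_of_mem
      (AffineMap.lineMap_mem_affineSpan_pair (footParam A B P) A B)).trans
      ((sq_le_sq₀ dist_nonneg (by positivity)).mp (le_of_eq ?_))
    rw [dist_sq_eq_coord, div_pow, sq_abs]
    simp only [footParam, lineMap_apply_coord, orient]
    field_simp
    rw [dist_sq_eq_coord]; ring
  · rw [div_le_iff₀ hd, orient_eq_cross_of_mem hQ]
    refine abs_le_of_sq_le_sq ?_ (by positivity)
    rw [mul_pow, dist_sq_eq_coord, dist_sq_eq_coord A B]
    simp only [cross, vsub_eq_sub, PiLp.sub_apply]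
    nlinarith [sq_nonneg ((B 0 - A 0) * (P 0 - Q 0) + (B 1 - A 1) * (P 1 - Q 1))]

lemma cross_mul_cross_pos_of_sameRay {d u v : Pt} (h : SameRay ℝ u v) (hu : cross d u ≠ 0)
    (hv : cross d v ≠ 0) : 0 < cross d u * cross d v := by
  have hu₀ : u ≠ 0 := by rintro rfl; simp [cross] at hu
  have hv₀ : v ≠ 0 := by rintro rfl; simp [cross] at hv
  obtain ⟨r₁, r₂, hr₁, hr₂, hr⟩ := h.exists_pos hu₀ hv₀
  have hr' := congrArg (cross d) hr
  rw [cross_smul_right, cross_smul_right] at hr'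
  have key : r₂ * (cross d u * cross d v) = r₁ * cross d u ^ 2 := by
    linear_combination (-cross d u) * hr'
  exact pos_of_mul_pos_right (key ▸ by positivity) hr₂.le

end Pt

open Pt

theorem AffineSubspace.SSameSide.orient_mul_pos {A B P Q : Pt} (hAB : A ≠ B)
    (h : (lineTh A B).SSameSide P Q) : 0 < orient A B P * orient A B Q := by
  obtain ⟨⟨p₁, hp₁, p₂, hp₂, hray⟩, hP, hQ⟩ := h
  rw [orient_eq_cross_of_mem (P := P) hp₁, orient_eq_cross_of_mem (P := Q) hp₂]
  exact cross_mul_cross_pos_of_sameRay hray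
    (orient_eq_cross_of_mem hp₁ ▸ orient_ne_zero_of_notMem hAB hP)
    (orient_eq_cross_of_mem hp₂ ▸ orient_ne_zero_of_notMem hAB hQ)

theorem AffineSubspace.SOppSide.orient_mul_neg {A B P Q : Pt} (hAB : A ≠ B)
    (h : (lineTh A B).SOppSide P Q) : orient A B P * orient A B Q < 0 := by
  obtain ⟨⟨p₁, hp₁, p₂, hp₂, hray⟩, hP, hQ⟩ := h
  have hQ_eq : orient A B Q = -cross (B -ᵥ A) (p₂ -ᵥ Q) := by
    rw [orient_eq_cross_of_mem hp₂, ← neg_vsub_eq_vsub_rev Q p₂, ← neg_one_smul ℝ (Q -ᵥ p₂),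
      cross_smul_right]
    ring
  have hpos := cross_mul_cross_pos_of_sameRay hray
    (orient_eq_cross_of_mem hp₁ ▸ orient_ne_zero_of_notMem hAB hP)
    (neg_ne_zero.mp (hQ_eq ▸ orient_ne_zero_of_notMem hAB hQ))
  rw [orient_eq_cross_of_mem (P := P) hp₁, hQ_eq]
  linarith

lemma div_eq_div_of_abs_div_eq_abs_div {K : Type*} [Field K] [LinearOrder K]
    [IsStrictOrderedRing K] {x y D a b : K} (hx : 0 < x * D) (hy : 0 < y * D)
    (h : |x| / a = |y| / b) : x / a = y / b := by
  rcases lt_or_gt_of_ne (show D ≠ 0 by rintro rfl; simp at hx) with hD | hD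
  · rwa [abs_of_neg (neg_of_mul_pos_left hx hD.le), abs_of_neg (neg_of_mul_pos_left hy hD.le),
      neg_div, neg_div, neg_inj] at h
  · rwa [abs_of_pos (pos_of_mul_pos_left hx hD.le), abs_of_pos (pos_of_mul_pos_left hy hD.le)] at h

section Excenter

variable {J A B C : Pt}

theorem IsExcenterC.vertices_ne (hJ : IsExcenterC J A B C) : A ≠ B ∧ B ≠ C ∧ C ≠ A := by
  obtain ⟨hoppC, hsameA, hsameB, -⟩ := hJ
  refine ⟨?_, ?_, ?_⟩ <;> rintro rfl
  · exact hsameA.2.2 (right_mem_affineSpan_pair ℝ _ _)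
  · exact hsameB.2.2 (left_mem_affineSpan_pair ℝ _ _)
  · exact hoppC.2.2 (left_mem_affineSpan_pair ℝ _ _)

theorem IsExcenterC.exists_orient_eq (hJ : IsExcenterC J A B C) :
    ∃ r ≠ 0, orient B C J = dist B C * r ∧ orient C A J = dist C A * r ∧
      orient A B J = -(dist A B * r) := by
  obtain ⟨hAB, hBC, hCA⟩ := hJ.vertices_ne
  obtain ⟨hoppC, hsameA, hsameB, hdist₁, hdist₂⟩ := hJ
  have hsA : 0 < orient B C J * orient A B C := by
    have h := hsameA.orient_mul_pos hBC.symm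
    rwa [orient_swap B C J, orient_swap B C A, neg_mul_neg, orient_rotate A B C] at h
  have hsB : 0 < orient C A J * orient A B C := by
    have h := hsameB.orient_mul_pos hCA
    rwa [orient_rotate B C A, orient_rotate A B C] at h
  have hoC : 0 < -orient A B J * orient A B C := by
    linarith [hoppC.orient_mul_neg hAB]
  rw [infDist_lineTh hBC, infDist_lineTh hCA] at hdist₁
  rw [infDist_lineTh hCA, infDist_lineTh hAB, ← abs_neg (orient A B J)] at hdist₂
  have e₁ := div_eq_div_of_abs_div_eq_abs_div hsA hsB hdist₁
  have e₂ := div_eq_div_of_abs_div_eq_abs_div hsB hoC hdist₂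
  have ha : dist B C ≠ 0 := dist_ne_zero.mpr hBC
  have hb : dist C A ≠ 0 := dist_ne_zero.mpr hCA
  have hc : dist A B ≠ 0 := dist_ne_zero.mpr hAB
  refine ⟨orient B C J / dist B C, div_ne_zero (left_ne_zero_of_mul hsA.ne') ha,
    by field_simp, ?_, ?_⟩
  · rw [e₁]; field_simp
  · rw [e₁, e₂]; field_simp

theorem IsExcenterC.smul_eq (hJ : IsExcenterC J A B C) :
    dist B C + dist C A - dist A B ≠ 0 ∧
      (dist B C + dist C A - dist A B) • J = dist B C • A + dist C A • B - dist A B • C := by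
  obtain ⟨hAB, -, -⟩ := hJ.vertices_ne
  obtain ⟨r, hr, hBCJ, hCAJ, hABJ⟩ := hJ.exists_orient_eq
  have hsum := orient_add_orient_add_orient A B C J
  have hcomb := orient_smul_eq A B C J
  rw [hBCJ, hCAJ, hABJ] at hsum hcomb
  rw [← hsum] at hcomb
  refine ⟨fun hs => orient_ne_zero_of_notMem hAB hJ.1.2.2 ?_, smul_right_injective Pt hr ?_⟩
  · rw [← hsum]; linear_combination r * hs
  · linear_combination (norm := module) hcomb

end Excenter

theorem dist_eq_of_smul_eq {A B C J M : Pt} (hs : dist B C + dist C A - dist A B ≠ 0)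
    (hJ : (dist B C + dist C A - dist A B) • J = dist B C • A + dist C A • B - dist A B • C)
    (hMBC : dist M B = dist M C) (hMA : dist M B ^ 2 - dist M A ^ 2 = dist C A * dist A B) :
    dist M J = dist M C := by
  set a := dist B C
  set b := dist C A
  set c := dist A B
  have hJ₀ := congrArg (· 0) hJ
  have hJ₁ := congrArg (· 1) hJ
  simp only [PiLp.add_apply, PiLp.sub_apply, PiLp.smul_apply, smul_eq_mul] at hJ₀ hJ₁
  have hMBC' : dist M B ^ 2 = dist M C ^ 2 := by rw [hMBC]
  rw [dist_sq_eq_coord, dist_sq_eq_coord] at hMBC' hMA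
  rw [← sq_eq_sq₀ dist_nonneg dist_nonneg, dist_sq_eq_coord, dist_sq_eq_coord]
  refine mul_left_cancel₀ (pow_ne_zero 2 hs) ?_
  -- Expand `‖a (M - A) + b (M - B) - c (M - C)‖²` using `2 ⟪M - X, M - Y⟫ = MX² + MY² - XY²`.
  linear_combination
    ((a + b - c) * J 0 + (a * A 0 + b * B 0 - c * C 0) - 2 * (a + b - c) * M 0) * hJ₀
    + ((a + b - c) * J 1 + (a * A 1 + b * B 1 - c * C 1) - 2 * (a + b - c) * M 1) * hJ₁
    + a * b * dist_sq_eq_coord A B - a * c * dist_sq_eq_coord C A - b * c * dist_sq_eq_coord B C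
    + (a + b - c) * (a + b) * hMBC' - (a + b - c) * a * hMA

namespace Pt

/-- Cartesian coordinates in the frame with origin `B` and first axis along `BC`. -/
def frameX (B C P : Pt) : ℝ := ((P 0 - B 0) * (C 0 - B 0) + (P 1 - B 1) * (C 1 - B 1)) / dist B C

def frameY (B C P : Pt) : ℝ := orient B C P / dist B C

variable {B C : Pt}

lemma dist_sq_eq_frame (hBC : B ≠ C) (P Q : Pt) :
    dist P Q ^ 2 = (frameX B C P - frameX B C Q) ^ 2 + (frameY B C P - frameY B C Q) ^ 2 := by
  have hd : dist B C ≠ 0 := dist_ne_zero.mpr hBC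
  simp only [frameX, frameY, orient]
  field_simp
  rw [dist_sq_eq_coord, dist_sq_eq_coord]
  ring

lemma frameX_left : frameX B C B = 0 := by simp [frameX]

lemma frameY_left : frameY B C B = 0 := by simp [frameY, orient]

lemma frameX_right (hBC : B ≠ C) : frameX B C C = dist B C := by
  have hd : dist B C ≠ 0 := dist_ne_zero.mpr hBC
  rw [frameX, div_eq_iff hd]
  linear_combination -dist_sq_eq_coord B C

lemma frameY_right : frameY B C C = 0 := by simp only [frameY, orient]; ring

lemma dist_sq_left_eq_frame (hBC : B ≠ C) (P : Pt) :
    dist P B ^ 2 = frameX B C P ^ 2 + frameY B C P ^ 2 := by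
  simp [dist_sq_eq_frame hBC, frameX_left, frameY_left]

lemma dist_sq_right_eq_frame (hBC : B ≠ C) (P : Pt) :
    dist P C ^ 2 = (frameX B C P - dist B C) ^ 2 + frameY B C P ^ 2 := by
  simp [dist_sq_eq_frame hBC, frameX_right hBC, frameY_right]

lemma frameX_eq_half_of_dist_eq (hBC : B ≠ C) {P : Pt} (h : dist P B = dist P C) :
    frameX B C P = dist B C / 2 := by
  have hd : dist B C ≠ 0 := dist_ne_zero.mpr hBC
  have h2 : dist P B ^ 2 = dist P C ^ 2 := by rw [h]
  rw [dist_sq_left_eq_frame hBC, dist_sq_right_eq_frame hBC] at h2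
  field_simp
  refine mul_left_cancel₀ hd ?_
  linear_combination h2

end Pt

/-- In the frame `B = (0, 0)`, `C = (a, 0)`, with `A = (p, q)`, circumcentre `(a/2, k)` and the
midpoint `(a/2, m)` of the arc `BAC`, where `b = CA` and `c = AB`. -/
lemma two_mul_mul_arcMidpoint_height {K : Type*} [Field K] [LinearOrder K]
    [IsStrictOrderedRing K] {a p q k m b c : K} (hb : 0 ≤ b) (hc : 0 ≤ c)
    (hb2 : b ^ 2 = (p - a) ^ 2 + q ^ 2) (hc2 : c ^ 2 = p ^ 2 + q ^ 2)
    (hk : 2 * q * k = c ^ 2 - a * p) (hm : m ^ 2 - 2 * k * m = a ^ 2 / 4) (hqm : 0 < q * m) :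
    2 * q * m = b * c + c ^ 2 - a * p := by
  have hsign : 0 ≤ q * (m - 2 * k) := by
    refine nonneg_of_mul_nonneg_right ?_ hqm
    nlinarith [sq_nonneg q, sq_nonneg a]
  have hsq : (2 * q * (m - k)) ^ 2 = (b * c) ^ 2 := by
    linear_combination 4 * q ^ 2 * hm + (2 * q * k + c ^ 2 - a * p) * hk - c ^ 2 * hb2
      - (a ^ 2 - c ^ 2) * hc2
  have h := (sq_eq_sq₀ (by nlinarith) (by positivity)).mp hsq
  linear_combination h + hk

theorem dist_sq_sub_dist_sq_of_arcMidpoint {A B C O M : Pt} (hBC : B ≠ C)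
    (hOA : dist O A = dist O B) (hOC : dist O C = dist O B) (hOM : dist O M = dist O B)
    (hMBC : dist M B = dist M C) (hside : (lineTh B C).SSameSide M A) :
    dist M B ^ 2 - dist M A ^ 2 = dist C A * dist A B := by
  have hOx := frameX_eq_half_of_dist_eq hBC hOC.symm
  have hMx := frameX_eq_half_of_dist_eq hBC hMBC
  have hc2 := dist_sq_left_eq_frame hBC A
  have hb2 : dist C A ^ 2 = (frameX B C A - dist B C) ^ 2 + frameY B C A ^ 2 := by
    rw [dist_comm]; exact dist_sq_right_eq_frame hBC A
  have hOA2 : dist O A ^ 2 = dist O B ^ 2 := by rw [hOA]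
  have hOM2 : dist O M ^ 2 = dist O B ^ 2 := by rw [hOM]
  rw [dist_sq_eq_frame hBC O A, dist_sq_left_eq_frame hBC O] at hOA2
  rw [dist_sq_eq_frame hBC O M, dist_sq_left_eq_frame hBC O] at hOM2
  have hk : 2 * frameY B C A * frameY B C O = dist A B ^ 2 - dist B C * frameX B C A := by
    linear_combination -hOA2 - hc2 - 2 * frameX B C A * hOx
  have hm : frameY B C M ^ 2 - 2 * frameY B C O * frameY B C M = dist B C ^ 2 / 4 := by
    linear_combination hOM2 + 2 * frameX B C M * hOx - (frameX B C M - dist B C / 2) * hMx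
  have hqm : 0 < frameY B C A * frameY B C M := by
    have h := hside.orient_mul_pos hBC
    have hd : dist B C ≠ 0 := dist_ne_zero.mpr hBC
    rw [show frameY B C A * frameY B C M = orient B C M * orient B C A / dist B C ^ 2 by
      simp only [frameY]; ring]
    positivity
  have key := two_mul_mul_arcMidpoint_height dist_nonneg dist_nonneg hb2 hc2 hk hm hqm
  rw [dist_sq_left_eq_frame hBC M, dist_sq_eq_frame hBC M A]
  linear_combination 2 * frameX B C A * hMx + hc2 + key

theorem arc_midpoint_excenter_general (A B C O M Jc : Pt) (R : ℝ)
    (hOA : dist O A = R) (hOB : dist O B = R) (hOC : dist O C = R)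
    (hM : dist O M = R) (hMB : dist M B = dist M C)
    (hMside : (lineTh B C).SSameSide M A)
    (hJ : IsExcenterC Jc A B C) :
    dist M B = dist M C ∧ dist M C = dist M Jc := by
  obtain ⟨-, hBC, -⟩ := hJ.vertices_ne
  obtain ⟨hs, hJc⟩ := hJ.smul_eq
  have hMA := dist_sq_sub_dist_sq_of_arcMidpoint hBC (hOA.trans hOB.symm)
    (hOC.trans hOB.symm) (hM.trans hOB.symm) hMB hMside
  exact ⟨hMB, (dist_eq_of_smul_eq hs hJc hMB hMA).symm⟩

/-- Variant of the incenter–excenter lemma: the midpoint of arc `BAC` is equidistant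
from `B`, `C` and the excenter opposite `C`. -/
theorem arc_midpoint_excenter (A B C O M Jc : Pt) (R : ℝ)
    (hABC : AffineIndependent ℝ ![A, B, C])
    (hOA : dist O A = R) (hOB : dist O B = R) (hOC : dist O C = R)
    (hM : dist O M = R) (hMB : dist M B = dist M C)
    (hMside : (lineTh B C).SSameSide M A)
    (hJ : IsExcenterC Jc A B C) :
    dist M B = dist M C ∧ dist M C = dist M Jc :=
  arc_midpoint_excenter_general A B C O M Jc R hOA hOB hOC hM hMB hMside hJ
end
end

section
/- Let ω and Γ be circles internally tangent at a point P, with ω inside Γ and ω tangent to a chord BC of Γ at a point E, with ω on the same side of BC as a fixed arc. Then the line PE passes through the midpoint M of the arc BC of Γ on the opposite side of BC from ω. -/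
open EuclideanGeometry Metric AffineSubspace Real RealInnerProductSpace

noncomputable section

lemma mem_lineTh_iff {A B X : Pt} : X ∈ lineTh A B ↔ ∃ t : ℝ, X = t • (B - A) + A := by
  unfold lineTh
  constructor
  · intro h
    have h' : (X - A) +ᵥ A ∈ line[ℝ, A, B] := by simpa using h
    rcases vadd_left_mem_affineSpan_pair.mp h' with ⟨t, ht⟩
    refine ⟨t, ?_⟩
    rw [vsub_eq_sub] at ht
    rw [ht]; abel
  · rintro ⟨t, rfl⟩
    have := smul_vsub_vadd_mem_affineSpan_pair t A B
    simpa using this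

lemma span_perp (d m : Pt) (hd : d ≠ 0) (hm : m ≠ 0) (hdm : ⟪d, m⟫ = 0) (v : Pt)
    (hv : ⟪d, v⟫ = 0) : ∃ c : ℝ, v = c • m := by
  have h1 : Submodule.span ℝ {m} ≤ (Submodule.span ℝ {d})ᗮ := by
    rw [Submodule.span_singleton_le_iff_mem, Submodule.mem_orthogonal]
    intro u hu
    rcases Submodule.mem_span_singleton.mp hu with ⟨a, rfl⟩
    simp [inner_smul_left, hdm]
  have hfr : Module.finrank ℝ (Submodule.span ℝ {m}) =
      Module.finrank ℝ ((Submodule.span ℝ {d})ᗮ) := by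
    have h2 := Submodule.finrank_add_finrank_orthogonal (𝕜 := ℝ) (Submodule.span ℝ {d})
    rw [finrank_span_singleton hd, finrank_euclideanSpace_fin] at h2
    rw [finrank_span_singleton hm]
    omega
  have heq := Submodule.eq_of_le_of_finrank_eq h1 hfr
  have hvmem : v ∈ (Submodule.span ℝ {d})ᗮ := by
    rw [Submodule.mem_orthogonal]
    intro u hu
    rcases Submodule.mem_span_singleton.mp hu with ⟨a, rfl⟩
    simp [inner_smul_left, hv]
  rw [← heq] at hvmem
  rcases Submodule.mem_span_singleton.mp hvmem with ⟨c, hc⟩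
  exact ⟨c, hc.symm⟩

/-- inner ⟪u-v, u+v⟫ = ‖u‖²-‖v‖² -/
lemma inner_sub_add_self (u v : Pt) : ⟪u - v, u + v⟫ = ‖u‖^2 - ‖v‖^2 := by
  rw [inner_sub_left, inner_add_right, inner_add_right, real_inner_comm v u,
    real_inner_self_eq_norm_sq, real_inner_self_eq_norm_sq]
  ring

set_option maxHeartbeats 2000000 in
/-- **Shooting lemma.** The line through the tangency points passes through the arc
midpoint on the far side of the chord. -/
theorem shooting_lemma (O B C W P E M : Pt) (R r : ℝ)
    (hr : 0 < r) (hrR : r < R) (hBC : B ≠ C)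
    (hOB : dist O B = R) (hOC : dist O C = R)
    (hWP : dist W P = r) (hOP : dist O P = R) (hint : dist W O = R - r)
    (hE : TangentAt W r B C E)
    (hM : dist O M = R) (hMB : dist M B = dist M C)
    (hMside : (lineTh B C).SOppSide M W) :
    Collinear ℝ ({P, E, M} : Set Pt) := by
  have hR : (0:ℝ) < R := hr.trans hrR
  obtain ⟨hEline, hWE, hmin⟩ := hE
  set d : Pt := C - B with hd_def
  set m : Pt := W - E with hm_def
  have hd0 : d ≠ 0 := sub_ne_zero.mpr (Ne.symm hBC)
  have hmnorm : ‖m‖ = r := by rw [hm_def, ← dist_eq_norm]; exact hWE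
  have hm0 : m ≠ 0 := by
    intro h; rw [h, norm_zero] at hmnorm; exact hr.ne' hmnorm.symm
  -- E = u • d + B
  obtain ⟨u, hu⟩ := mem_lineTh_iff.mp hEline
  -- orthogonality: ⟪d, m⟫ = 0
  have hdm : ⟪d, m⟫ = 0 := by
    have key : ∀ t : ℝ, 0 ≤ t^2 * ‖d‖^2 - 2 * t * ⟪m, d⟫ := by
      intro t
      have hQ : ((u + t) • d + B) ∈ lineTh B C := mem_lineTh_iff.mpr ⟨u + t, rfl⟩
      have h1 : r ≤ dist W ((u + t) • d + B) := hmin _ hQ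
      have h2 : W - ((u + t) • d + B) = m - t • d := by
        rw [hm_def, hu]; rw [add_smul]; abel
      have h3 : r^2 ≤ ‖m - t • d‖^2 := by
        rw [← dist_eq_norm] at *
        calc r^2 ≤ (dist W ((u + t) • d + B))^2 := by nlinarith [dist_nonneg (x := W) (y := ((u + t) • d + B))]
        _ = ‖W - ((u + t) • d + B)‖^2 := by rw [dist_eq_norm]
        _ = ‖m - t • d‖^2 := by rw [h2]
      have h4 : ‖m - t • d‖^2 = ‖m‖^2 - 2 * t * ⟪m, d⟫ + t^2 * ‖d‖^2 := by
        rw [norm_sub_sq_real, inner_smul_right, norm_smul]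
        simp [mul_pow]
        ring
      rw [h4, hmnorm] at h3
      nlinarith
    have hdd : (0:ℝ) < ‖d‖^2 := by
      have : 0 < ‖d‖ := norm_pos_iff.mpr hd0
      positivity
    have h5 := key (⟪m, d⟫ / ‖d‖^2)
    have h6 : ⟪m, d⟫ = 0 := by
      have h5' : (⟪m, d⟫/‖d‖^2)^2*‖d‖^2 - 2*(⟪m, d⟫/‖d‖^2)*⟪m, d⟫ = -(⟪m, d⟫^2/‖d‖^2) := by
        field_simp; ring
      rw [h5'] at h5
      have h7 : ⟪m, d⟫^2/‖d‖^2 ≤ 0 := by linarith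
      have h8 : ⟪m, d⟫^2 ≤ 0 := by
        by_contra h9
        push_neg at h9
        exact absurd h7 (not_le.mpr (div_pos h9 hdd))
      nlinarith [sq_nonneg ⟪m, d⟫]
    rw [real_inner_comm]; exact h6
  -- W between O and P
  have hbtw : Wbtw ℝ O W P := by
    rw [← dist_add_dist_eq_iff]
    rw [dist_comm O W, hint, hWP, hOP]; ring
  have hWO : W - O = ((R - r)/R) • (P - O) := by
    rcases hbtw with ⟨t, ht, hlin⟩
    have hlin' : W = t • (P - O) + O := by
      rw [← hlin]; simp [AffineMap.lineMap_apply]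
    have hnorm : ‖W - O‖ = t * ‖P - O‖ := by
      rw [hlin']
      have : t • (P - O) + O - O = t • (P - O) := by abel
      rw [this, norm_smul, Real.norm_eq_abs, abs_of_nonneg ht.1]
    rw [← dist_eq_norm, hint, ← dist_eq_norm, dist_comm P O, hOP] at hnorm
    have htval : t = (R - r)/R := by field_simp; linarith
    rw [hlin']
    rw [← htval]
    abel
  -- the homothety image of E
  have hWsub : W = ((R - r)/R) • (P - O) + O := by
    rw [← hWO]; abel
  have hM'O : (R/r) • (E - P) + P - O = (R/r) • (E - W) := by
    rw [hWsub]
    match_scalars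
    · ring
    · field_simp; ring
    · field_simp; ring
  have hEW0 : E - W = -m := by rw [hm_def]; abel
  have hEWnorm : ‖E - W‖ = r := by rw [hEW0, norm_neg]; exact hmnorm
  have hM'perp : ⟪d, (R/r) • (E - W)⟫ = 0 := by
    rw [inner_smul_right, hEW0, inner_neg_right, hdm]; ring
  -- M - O is perpendicular to d
  have equi : ∀ X : Pt, dist X B = dist X C → ⟪d, (X - B) + (X - C)⟫ = 0 := by
    intro X h
    have h2 : ‖X - B‖ = ‖X - C‖ := by rw [← dist_eq_norm, ← dist_eq_norm]; exact h
    have h3 : ⟪(X - B) - (X - C), (X - B) + (X - C)⟫ = 0 := by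
      rw [inner_sub_add_self, h2]; ring
    have h4 : (X - B) - (X - C) = d := by rw [hd_def]; abel
    rwa [h4] at h3
  have hMperp : ⟪d, M - O⟫ = 0 := by
    have h1 := equi M hMB
    have h2 := equi O (by rw [hOB, hOC])
    have h3 : (M - B) + (M - C) - ((O - B) + (O - C)) = (M - O) + (M - O) := by
      abel
    have h4 : ⟪d, (M - O) + (M - O)⟫ = 0 := by rw [← h3, inner_sub_right, h1, h2]; ring
    rw [inner_add_right] at h4; linarith
  have hEW0' : E - W ≠ 0 := by rw [hEW0]; simpa using hm0
  have hdEW : ⟪d, E - W⟫ = 0 := by rw [hEW0, inner_neg_right, hdm]; ring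
  obtain ⟨c, hc⟩ := span_perp d (E - W) hd0 hEW0' hdEW (M - O) hMperp
  have hMOnorm : ‖M - O‖ = R := by rw [← dist_eq_norm, dist_comm]; exact hM
  have habs : |c| = R / r := by
    rw [hc, norm_smul, Real.norm_eq_abs, hEWnorm] at hMOnorm
    field_simp
    linarith
  -- side function analysis
  have hfline : ∀ X ∈ lineTh B C, ⟪m, X - E⟫ = 0 := by
    intro X hX
    obtain ⟨t, rfl⟩ := mem_lineTh_iff.mp hX
    have h1 : t • (C - B) + B - E = (t - u) • d := by
      rw [hu, hd_def, sub_smul]; abel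
    rw [h1, inner_smul_right, real_inner_comm, hdm]; ring
  have hfW : ⟪m, W - E⟫ = r^2 := by
    rw [← hm_def, real_inner_self_eq_norm_sq, hmnorm]
  obtain ⟨⟨p₁, hp₁, p₂, hp₂, hray⟩, hMnotin, hWnotin⟩ := hMside
  have hray2 : SameRay ℝ (⟪m, M - p₁⟫) (⟪m, p₂ - W⟫) := by
    have h1 := hray.map (innerSL ℝ m).toLinearMap
    simpa using h1
  have hMp₁ : ⟪m, M - p₁⟫ = ⟪m, M - E⟫ := by
    have h1 : M - p₁ = (M - E) - (p₁ - E) := by abel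
    rw [h1, inner_sub_right, hfline p₁ hp₁]; ring
  have hp₂W : ⟪m, p₂ - W⟫ = -r^2 := by
    have h1 : p₂ - W = (p₂ - E) - (W - E) := by abel
    rw [h1, inner_sub_right, hfline p₂ hp₂, hfW]; ring
  have hfM : ⟪m, M - E⟫ < 0 := by
    rw [hMp₁, hp₂W] at hray2
    have hray3 : ⟪m, M - E⟫ = 0 ∨ (-r^2 : ℝ) = 0 ∨
        ∃ a b : ℝ, 0 < a ∧ 0 < b ∧ a • ⟪m, M - E⟫ = b • (-r^2 : ℝ) := hray2
    rcases hray3 with h | h | ⟨a, b, ha, hb, hab⟩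
    · exfalso
      obtain ⟨s, hs⟩ := span_perp m d hm0 hd0 (by rw [real_inner_comm]; exact hdm) (M - E) h
      apply hMnotin
      rw [mem_lineTh_iff]
      refine ⟨s + u, ?_⟩
      have hME : M = s • d + E := sub_eq_iff_eq_add.mp hs
      rw [hME, hu, hd_def, add_smul]
      abel
    · exfalso; nlinarith
    · have hab' : a * ⟪m, M - E⟫ = b * (-r^2) := hab
      by_contra hge
      push_neg at hge
      have h1 : 0 ≤ a * ⟪m, M - E⟫ := mul_nonneg ha.le hge
      have h2 : 0 < b * r^2 := mul_pos hb (pow_pos hr 2)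
      nlinarith [hab', h1, h2]
  have hfMval : ⟪m, M - E⟫ = -c * r^2 + ⟪m, O - W⟫ + r^2 := by
    have h1 : M - E = (M - O) + (O - W) + (W - E) := by abel
    rw [h1, inner_add_right, inner_add_right, hc, inner_smul_right, hfW, hEW0,
      inner_neg_right, real_inner_self_eq_norm_sq, hmnorm]
    ring
  have hOW : -((R - r) * r) ≤ ⟪m, O - W⟫ := by
    have h1 := real_inner_le_norm m (W - O)
    have h2 : ‖W - O‖ = R - r := by rw [← dist_eq_norm]; exact hint
    have h3 : ⟪m, O - W⟫ = -⟪m, W - O⟫ := by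
      rw [show O - W = -(W - O) by abel, inner_neg_right]
    rw [hmnorm, h2] at h1
    rw [h3]; nlinarith
  have hcval : c = R / r := by
    rcases abs_cases c with ⟨h1, _⟩ | ⟨h1, _⟩
    · rw [← h1]; exact habs
    · exfalso
      have hcneg : c = -(R/r) := by
        have h2 : -c = R/r := h1.symm.trans habs
        linarith
      rw [hfMval, hcneg] at hfM
      have hx : -(-(R/r)) * r^2 = R * r := by field_simp
      nlinarith
  have hMM' : M = (R/r) • (E - P) + P := by
    have h1 : M - O = (R/r) • (E - P) + P - O := by rw [hc, hcval, hM'O]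
    have h2 : M - O + O = (R/r) • (E - P) + P - O + O := by rw [h1]
    simpa using h2
  rw [collinear_iff_of_mem (Set.mem_insert P ({E, M} : Set Pt))]
  refine ⟨E - P, ?_⟩
  intro p hp
  rcases hp with rfl | rfl | rfl
  · exact ⟨0, by simp⟩
  · exact ⟨1, by simp⟩
  · refine ⟨R/r, ?_⟩
    rw [hMM']
    simp
end
end

section
/- Let Ω, ω_a, and ω be three circles such that ω_a and ω are both internally tangent to Ω, at points A' and P respectively, and both tangent to a common line k at points F and E respectively, with ω_a and ω on the same side of k. Let J₊ be the intersection of line k with line A'P. Then J₊ is the external homothety center of ω_a and ω, and the four points P, E, F, A' are concyclic. -/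
open EuclideanGeometry Metric AffineSubspace Real RealInnerProductSpace

noncomputable section

/-!
Let `M` be the point of `Ω` whose tangent is parallel to `k`, on the other side of `k` from the
small circles. The homothety centred at `A'` taking `ω_a` to `Ω` sends `F` to `M`, so `F` lies on
the chord `MA'`; likewise `E` lies on `MP`, and `FE` is perpendicular to the diameter through `M`.
Then `MF · MA' = ME · MP`, which makes `A', P, F, E` concyclic. For `J` on `A'P` the vector
`(ra/R)(E - J) - (r/R)(F - J)` is parallel to `A'P` and, since `J, E, F ∈ k`, orthogonal to `OM`;
it vanishes unless `A'P ∥ k`, which would put both `A'` and `P` on the tangent at `M`.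
-/

section InnerProductSpace

variable {V : Type*} [NormedAddCommGroup V] [InnerProductSpace ℝ V] {O M A P F E J : V}

theorem norm_sub_sq_eq_two_inner_of_dist_eq (hA : dist A O = dist M O) :
    ‖A - M‖ ^ 2 = 2 * ⟪A - M, O - M⟫ := by
  have h : ‖(A - M) - (O - M)‖ ^ 2 = ‖-(O - M)‖ ^ 2 := by
    rw [sub_sub_sub_cancel_right, neg_sub, ← dist_eq_norm, ← dist_eq_norm, hA]
  rw [norm_sub_sq_real, norm_neg] at h
  linarith

theorem eq_of_dist_eq_of_inner_eq_zero (hA : dist A O = dist M O) (h : ⟪A - M, O - M⟫ = 0) :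
    A = M := by
  have := norm_sub_sq_eq_two_inner_of_dist_eq hA
  rwa [h, mul_zero, sq_eq_zero_iff, norm_eq_zero, sub_eq_zero] at this

theorem smul_sub_eq_zero_of_dist_eq_of_inner_eq_zero {t : ℝ} (hA : dist A O = dist M O)
    (h : ⟪O - M, t • (A - M)⟫ = 0) : t • (A - M) = 0 := by
  rw [real_inner_smul_right, real_inner_comm, mul_eq_zero] at h
  rcases h with rfl | h
  · exact zero_smul _ _
  · rw [eq_of_dist_eq_of_inner_eq_zero hA h, sub_self, smul_zero]

theorem exists_mul_eq_and_mul_eq {a b x y : ℝ} (h : a * y = b * x) (hx : x = 0 → a = 0)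
    (hy : y = 0 → b = 0) : ∃ s, a = s * x ∧ b = s * y := by
  by_cases hx0 : x = 0
  · by_cases hy0 : y = 0
    · exact ⟨0, by simp [hx hx0], by simp [hy hy0]⟩
    · exact ⟨b / y, by simp [hx hx0, hx0], by field_simp⟩
  · refine ⟨a / x, by field_simp, ?_⟩
    field_simp
    linarith

theorem dist_eq_dist_iff_inner_add_sub_eq_zero {X Y c : V} :
    dist X c = dist Y c ↔ ⟪(X - c) + (Y - c), X - Y⟫ = 0 := by
  rw [← sub_sub_sub_cancel_right X Y c, real_inner_add_sub_eq_zero_iff, dist_eq_norm,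
    dist_eq_norm]

theorem cospherical_of_mem_chords_of_perp {t u : ℝ} (hA : dist A O = dist M O)
    (hP : dist P O = dist M O) (hF : F - M = t • (A - M)) (hE : E - M = u • (P - M))
    (hFE : ⟪F - E, O - M⟫ = 0) : Cospherical ({P, E, F, A} : Set V) := by
  have hAF : A - F = (1 - t) • (A - M) := by rw [sub_smul, one_smul, ← hF]; abel
  have hPE : P - E = (1 - u) • (P - M) := by rw [sub_smul, one_smul, ← hE]; abel
  have hAE : A - E = (A - M) - u • (P - M) := by rw [← hE]; abel
  have hPF : P - F = (P - M) - t • (A - M) := by rw [← hF]; abel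
  have hFE' : F - E = t • (A - M) - u • (P - M) := by rw [← hE, ← hF]; abel
  have hA2 := norm_sub_sq_eq_two_inner_of_dist_eq hA
  have hP2 := norm_sub_sq_eq_two_inner_of_dist_eq hP
  -- The centre is sought as `(F + E) / 2 + s • (O - M)`, on the perpendicular bisector of `FE`;
  -- `A` and `P` give one linear equation in `s` each, and `hcross` says they are compatible.
  have hcross : ⟪A - E, A - F⟫ * (2 * ⟪O - M, P - E⟫) =
      ⟪P - F, P - E⟫ * (2 * ⟪O - M, A - F⟫) := by
    rw [hFE'] at hFE
    rw [hAF, hPE, hAE, hPF]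
    generalize A - M = a, P - M = p, O - M = m at hFE hA2 hP2 ⊢
    simp only [inner_sub_left, real_inner_smul_left, real_inner_smul_right,
      real_inner_self_eq_norm_sq, real_inner_comm a p, real_inner_comm a m,
      real_inner_comm p m] at hFE hA2 hP2 ⊢
    linear_combination (2 * (1 - t) * (1 - u) * ⟪p, m⟫) * hA2
      - (2 * (1 - t) * (1 - u) * ⟪a, m⟫) * hP2
      + (2 * (1 - t) * (1 - u) * ⟪a, p⟫) * hFE
  obtain ⟨s, hsA, hsP⟩ := exists_mul_eq_and_mul_eq hcross
    (fun h => by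
      rw [hAF] at h ⊢
      rw [smul_sub_eq_zero_of_dist_eq_of_inner_eq_zero hA (by linarith), inner_zero_right])
    (fun h => by
      rw [hPE] at h ⊢
      rw [smul_sub_eq_zero_of_dist_eq_of_inner_eq_zero hP (by linarith), inner_zero_right])
  set c := (1 / 2 : ℝ) • (F + E) + s • (O - M)
  have hEF : dist E c = dist F c := by
    rw [dist_eq_dist_iff_inner_add_sub_eq_zero,
      show E - c + (F - c) = -(2 * s) • (O - M) by module, real_inner_smul_left,
      real_inner_comm, ← neg_sub, inner_neg_left, hFE, neg_zero, mul_zero]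
  refine ⟨c, dist F c, ?_⟩
  simp only [Set.mem_insert_iff, Set.mem_singleton_iff]
  rintro X (rfl | rfl | rfl | rfl)
  · rw [← hEF, dist_eq_dist_iff_inner_add_sub_eq_zero,
      show X - c + (E - c) = (X - F) - (2 * s) • (O - M) by module, inner_sub_left,
      real_inner_smul_left]
    linarith
  · exact hEF
  · rfl
  · rw [dist_eq_dist_iff_inner_add_sub_eq_zero,
      show X - c + (F - c) = (X - E) - (2 * s) • (O - M) by module, inner_sub_left,
      real_inner_smul_left]
    linarith

theorem smul_sub_eq_smul_sub_of_mem_chords_of_perp {s₁ s₂ : ℝ} (hA : dist A O = dist M O)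
    (hP : dist P O = dist M O) (hAP : A ≠ P) (hF : F - M = (1 - s₁) • (A - M))
    (hE : E - M = (1 - s₂) • (P - M)) (hs₁ : s₁ ≠ 0) (hJ : J ∈ line[ℝ, A, P])
    (hFJ : ⟪F - J, O - M⟫ = 0) (hEJ : ⟪E - J, O - M⟫ = 0) :
    s₁ • (E - J) = s₂ • (F - J) := by
  obtain ⟨t, rfl⟩ := mem_affineSpan_pair_iff_exists_lineMap_eq.1 hJ
  rw [AffineMap.lineMap_apply, vsub_eq_sub, vadd_eq_add] at hFJ hEJ ⊢
  have hV : s₁ • (E - (t • (P - A) + A)) - s₂ • (F - (t • (P - A) + A)) =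
      (s₁ * (1 - s₂) - (s₁ - s₂) * t) • (P - A) := by
    linear_combination (norm := module) s₁ • hE - s₂ • hF
  have h0 : (s₁ * (1 - s₂) - (s₁ - s₂) * t) * ⟪P - A, O - M⟫ = 0 := by
    rw [← real_inner_smul_left, ← hV, inner_sub_left, real_inner_smul_left, real_inner_smul_left,
      hFJ, hEJ, mul_zero, mul_zero, sub_zero]
  rcases mul_eq_zero.1 h0 with hα | hPA
  · rwa [hα, zero_smul, sub_eq_zero] at hV
  · -- Otherwise `AP ⟂ OM` too, which puts `A`, and then `P`, on the tangent at `M`.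
    have hAM : ⟪A - M, O - M⟫ = 0 := by
      have hFJ' : F - (t • (P - A) + A) = -s₁ • (A - M) - t • (P - A) := by
        linear_combination (norm := module) hF
      rw [hFJ', inner_sub_left, real_inner_smul_left, real_inner_smul_left, hPA] at hFJ
      simpa [hs₁] using hFJ
    have hAM' := eq_of_dist_eq_of_inner_eq_zero hA hAM
    rw [hAM'] at hPA hAP
    exact absurd (eq_of_dist_eq_of_inner_eq_zero hP hPA).symm hAP

theorem smul_sub_eq_smul_sub_of_dist_eq_sub {C X : V} {R ρ : ℝ} (hCX : dist C X = ρ)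
    (hOX : dist O X = R) (hCO : dist C O = R - ρ) : R • (C - O) = (R - ρ) • (X - O) := by
  have hw : Wbtw ℝ O C X := by
    rw [← dist_add_dist_eq_iff, dist_comm, hCO, hCX, hOX, sub_add_cancel]
  obtain ⟨t, ⟨ht0, -⟩, rfl⟩ := hw
  have ht : R - ρ = t * R := by
    rw [← hCO, dist_lineMap_left, hOX, Real.norm_eq_abs, abs_of_nonneg ht0]
  rw [ht, AffineMap.lineMap_apply, vsub_eq_sub, vadd_eq_add, add_sub_cancel_right, smul_smul,
    mul_comm]

end InnerProductSpace

theorem TangentAt.isTangentAt {O A B E : Pt} {r : ℝ} (h : TangentAt O r A B E) :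
    (⟨O, r⟩ : Sphere Pt).IsTangentAt E (lineTh A B) := by
  obtain ⟨hE, hr, hmin⟩ := h
  have : Nonempty (lineTh A B) := ⟨⟨E, hE⟩⟩
  have hinf : infDist O (lineTh A B : Set Pt) = r :=
    le_antisymm (hr ▸ infDist_le_dist_of_mem hE) ((le_infDist ⟨E, hE⟩).2 hmin)
  obtain ⟨p, hp⟩ := (Sphere.infDist_eq_radius_iff_isTangent (s := ⟨O, r⟩)).1 hinf
  have hEs : E ∈ (⟨O, r⟩ : Sphere Pt) := by rw [EuclideanGeometry.mem_sphere, dist_comm]; exact hr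
  rwa [← hp.eq_of_mem_of_mem hEs hE] at hp

theorem TangentAt.inner_sub_eq_zero {O A B E X Y : Pt} {r : ℝ} (h : TangentAt O r A B E)
    (hX : X ∈ lineTh A B) (hY : Y ∈ lineTh A B) : ⟪X - Y, O - E⟫ = 0 := by
  have hXE : ⟪X - E, E - O⟫ = 0 := h.isTangentAt.inner_left_eq_zero_of_mem hX
  have hYE : ⟪Y - E, E - O⟫ = 0 := h.isTangentAt.inner_left_eq_zero_of_mem hY
  rw [← sub_sub_sub_cancel_right X Y E, ← neg_sub E O, inner_neg_right, inner_sub_left, hXE, hYE,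
    sub_zero, neg_zero]

theorem sub_eq_smul_sub_of_tangentAt_of_sSameSide {O₁ O₂ A B E₁ E₂ : Pt} {r₁ r₂ : ℝ}
    (hAB : A ≠ B) (h₁ : TangentAt O₁ r₁ A B E₁) (h₂ : TangentAt O₂ r₂ A B E₂)
    (hside : (lineTh A B).SSameSide O₁ O₂) : O₂ - E₂ = (r₂ / r₁) • (O₁ - E₁) := by
  have hfin : Module.finrank ℝ (lineTh A B).direction + 1 = Module.finrank ℝ Pt := by
    rw [lineTh, direction_affineSpan, vectorSpan_pair, finrank_span_singleton (vsub_ne_zero.2 hAB),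
      finrank_euclideanSpace_fin]
  have hr : ∀ {O E r}, TangentAt O r A B E → O ∉ lineTh A B → r ≠ 0 := by
    rintro O E r ⟨hE, rfl, -⟩ hO h0
    rw [dist_eq_zero.1 h0] at hO
    exact hO hE
  have hk₁ := h₁.isTangentAt.eq_orthRadius_of_finrank_add_one_eq (hr h₁ hside.2.1) hfin
  have hk₂ := h₂.isTangentAt.eq_orthRadius_of_finrank_add_one_eq (hr h₂ hside.2.2) hfin
  have hdir := congrArg direction (hk₁.symm.trans hk₂)
  simp only [Sphere.direction_orthRadius, Submodule.orthogonalComplement_eq_orthogonalComplement,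
    Submodule.span_singleton_eq_span_singleton] at hdir
  obtain ⟨c, hc⟩ := hdir
  have hO₂ : O₂ - E₂ = (c : ℝ) • (O₁ - E₁) := by
    rw [← neg_sub E₂, ← vsub_eq_sub, ← hc, Units.smul_def, vsub_eq_sub, ← smul_neg, neg_sub]
  have hc0 : 0 < (c : ℝ) := by
    refine lt_of_not_ge fun hle => hside.symm.not_sOppSide ?_
    have := sOppSide_smul_vsub_vadd_left hside.2.1 h₁.1 h₂.1 (lt_of_le_of_ne hle c.ne_zero)
    rwa [vsub_eq_sub, ← hO₂, vadd_eq_add, sub_add_cancel] at this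
  have hr₂ : r₂ = c * r₁ := by
    rw [← h₁.2.1, ← h₂.2.1, dist_eq_norm, dist_eq_norm, hO₂, norm_smul,
      Real.norm_eq_abs, abs_of_pos hc0]
  rw [hO₂, hr₂, mul_div_cancel_right₀ _ (hr h₁ hside.2.1)]

theorem homothety_center_concyclic_general (O Oa W A' P K₁ K₂ F E J : Pt) (R ra r : ℝ)
    (hra : 0 < ra)
    (hK : K₁ ≠ K₂)
    (hA'₁ : dist Oa A' = ra) (hA'₂ : dist O A' = R) (hA'₃ : dist Oa O = R - ra)
    (hP₁ : dist W P = r) (hP₂ : dist O P = R) (hP₃ : dist W O = R - r)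
    (hF : TangentAt Oa ra K₁ K₂ F) (hE : TangentAt W r K₁ K₂ E)
    (hside : (lineTh K₁ K₂).SSameSide Oa W)
    (hAP : A' ≠ P)
    (hJ₁ : J ∈ lineTh K₁ K₂) (hJ₂ : J ∈ lineTh A' P) :
    W - J = (r / ra) • (Oa - J) ∧ Concyclic ({P, E, F, A'} : Set Pt) := by
  have hR : 0 < R := by linarith [hA'₃ ▸ dist_nonneg (x := Oa) (y := O)]
  have hW := sub_eq_smul_sub_of_tangentAt_of_sSameSide hK hF hE hside
  set M := O - (R / ra) • (Oa - F)
  have hOM : O - M = (R / ra) • (Oa - F) := sub_sub_cancel _ _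
  have hMO : dist M O = R := by
    rw [dist_comm, dist_eq_norm, hOM, norm_smul, ← dist_eq_norm, hF.2.1, Real.norm_eq_abs,
      abs_of_pos (by positivity), div_mul_cancel₀ _ hra.ne']
  have hA : dist A' O = dist M O := by rw [dist_comm, hA'₂, hMO]
  have hP : dist P O = dist M O := by rw [dist_comm, hP₂, hMO]
  have hFM : F - M = (1 - ra / R) • (A' - M) := by
    linear_combination (norm := match_scalars <;> field)
      R⁻¹ • smul_sub_eq_smul_sub_of_dist_eq_sub hA'₁ hA'₂ hA'₃
  have hEM : E - M = (1 - r / R) • (P - M) := by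
    linear_combination (norm := match_scalars <;> field)
      R⁻¹ • smul_sub_eq_smul_sub_of_dist_eq_sub hP₁ hP₂ hP₃ - hW
  have hk : ∀ X ∈ lineTh K₁ K₂, ∀ Y ∈ lineTh K₁ K₂, ⟪X - Y, O - M⟫ = 0 := fun X hX Y hY => by
    rw [hOM, real_inner_smul_right, hF.inner_sub_eq_zero hX hY, mul_zero]
  refine ⟨?_, cospherical_of_mem_chords_of_perp hA hP hFM hEM (hk F hF.1 E hE.1),
    coplanar_of_finrank_eq_two _ finrank_euclideanSpace_fin⟩
  have hJ := smul_sub_eq_smul_sub_of_mem_chords_of_perp hA hP hAP hFM hEM (by positivity) hJ₂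
    (hk F hF.1 J hJ₁) (hk E hE.1 J hJ₁)
  linear_combination (norm := match_scalars <;> field) hW + (R / ra) • hJ

/-- Two circles inscribed in a circular segment-like configuration: `J₊` is the external
homothety center of `ω_a` and `ω`, and `P`, `E`, `F`, `A'` are concyclic. -/
theorem homothety_center_concyclic (O Oa W A' P K₁ K₂ F E J : Pt) (R ra r : ℝ)
    (hra : 0 < ra) (hr : 0 < r)
    (hK : K₁ ≠ K₂)
    (hA'₁ : dist Oa A' = ra) (hA'₂ : dist O A' = R) (hA'₃ : dist Oa O = R - ra)
    (hP₁ : dist W P = r) (hP₂ : dist O P = R) (hP₃ : dist W O = R - r)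
    (hF : TangentAt Oa ra K₁ K₂ F) (hE : TangentAt W r K₁ K₂ E)
    (hside : (lineTh K₁ K₂).SSameSide Oa W)
    (hAP : A' ≠ P)
    (hJ₁ : J ∈ lineTh K₁ K₂) (hJ₂ : J ∈ lineTh A' P) :
    W - J = (r / ra) • (Oa - J) ∧ Concyclic ({P, E, F, A'} : Set Pt) :=
  homothety_center_concyclic_general O Oa W A' P K₁ K₂ F E J R ra r hra hK hA'₁ hA'₂ hA'₃ hP₁ hP₂
    hP₃ hF hE hside hAP hJ₁ hJ₂
end
end

section
/- Let circles Ω and ω be internally tangent at a point A, and let B ≠ A be a point in the plane. Let f be a projective involution of the circle ω. For X on ω, define Y as the second intersection of the circle through A, X, B with Ω, and Y' as the second intersection of the circle through A, f(X), B with Ω. Then the induced map Y ↦ Y' is a projective involution of Ω. -/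
/-!
Invert at `A`, `w = (z - A)⁻¹`. With `c = O₁ - A`, the tangent circles `ω` and `Ω` become the
parallel lines `Re (c w) = 1/2` and `Re (c w) = r / (2R)`, and a circle `(A X B)` becomes the line
through the images of `X` and `B`; the latter is read off from the reality of the cross ratio of
`A, X, Y, B`. So in the `w`-plane `X ↦ Y` is the central projection from `b = (B - A)⁻¹` of one
line onto the other, i.e. a homothety with centre `b`. Back in the `z`-plane it is a Möbius map `T`
fixing `A` and carrying `ω` onto `Ω`; Möbius maps preserve cross ratios, so `T ∘ f ∘ T⁻¹` is the
required involution of `Ω`. When `B ∈ Ω` the map `Y` is constant and `g = id` works, and `B ∈ ω`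
is impossible because then `(A X B) = ω` meets `Ω` only at `A`.
-/

open EuclideanGeometry Metric

noncomputable section

/-- The cross ratio of four points of the plane `ℂ`.  A bijection of a circle onto itself
is a projectivity of the circle (viewed as a conic) iff it preserves this cross ratio. -/
def crossRatio (a b c d : ℂ) : ℂ := ((a - c) * (b - d)) / ((a - d) * (b - c))

/-- `f` is a projective involution of the circle `S`: it maps `S` to itself, is an
involution on `S`, and preserves the cross ratio of points of `S`. -/
def IsCircleInvolution (S : Set ℂ) (f : ℂ → ℂ) : Prop :=
  (∀ X ∈ S, f X ∈ S) ∧ (∀ X ∈ S, f (f X) = X) ∧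
  ∀ a ∈ S, ∀ b ∈ S, ∀ c ∈ S, ∀ d ∈ S,
    crossRatio (f a) (f b) (f c) (f d) = crossRatio a b c d

def PreservesCrossRatioOn (T : ℂ → ℂ) (S : Set ℂ) : Prop :=
  ∀ a ∈ S, ∀ b ∈ S, ∀ c ∈ S, ∀ d ∈ S, crossRatio (T a) (T b) (T c) (T d) = crossRatio a b c d

theorem IsCircleInvolution.conj {S S' : Set ℂ} {f T T' : ℂ → ℂ} (hf : IsCircleInvolution S f)
    (hT : Set.MapsTo T S S') (hT' : Set.MapsTo T' S' S) (hinv : Set.InvOn T' T S S')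
    (hcr : PreservesCrossRatioOn T S) : IsCircleInvolution S' (T ∘ f ∘ T') := by
  obtain ⟨hfS, hff, hfcr⟩ := hf
  refine ⟨fun X hX => hT (hfS _ (hT' hX)), fun X hX => ?_, fun a ha b hb c hc d hd => ?_⟩
  · simp only [Function.comp_apply]
    rw [hinv.1 (hfS _ (hT' hX)), hff _ (hT' hX), hinv.2 hX]
  · simp only [Function.comp_apply]
    rw [hcr _ (hfS _ (hT' ha)) _ (hfS _ (hT' hb)) _ (hfS _ (hT' hc)) _ (hfS _ (hT' hd)),
      hfcr _ (hT' ha) _ (hT' hb) _ (hT' hc) _ (hT' hd),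
      ← hcr _ (hT' ha) _ (hT' hb) _ (hT' hc) _ (hT' hd), hinv.2 ha, hinv.2 hb, hinv.2 hc,
      hinv.2 hd]

theorem crossRatio_moebius {α β γ δ : ℂ} (hdet : α * δ - β * γ ≠ 0) {a b c d : ℂ}
    (ha : γ * a + δ ≠ 0) (hb : γ * b + δ ≠ 0) (hc : γ * c + δ ≠ 0) (hd : γ * d + δ ≠ 0) :
    crossRatio ((α * a + β) / (γ * a + δ)) ((α * b + β) / (γ * b + δ))
      ((α * c + β) / (γ * c + δ)) ((α * d + β) / (γ * d + δ)) = crossRatio a b c d := by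
  have hsub : ∀ x y : ℂ, γ * x + δ ≠ 0 → γ * y + δ ≠ 0 →
      (α * x + β) / (γ * x + δ) - (α * y + β) / (γ * y + δ)
        = (α * δ - β * γ) * (x - y) / ((γ * x + δ) * (γ * y + δ)) := by
    intro x y hx hy
    rw [div_sub_div _ _ hx hy]
    ring
  simp only [crossRatio]
  rw [hsub a c ha hc, hsub b d hb hd, hsub a d ha hd, hsub b c hb hc]
  by_cases had : a = d
  · simp [had]
  by_cases hbc : b = c
  · simp [hbc]
  have := sub_ne_zero.2 had
  have := sub_ne_zero.2 hbc
  field_simp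

theorem crossRatio_sub_const (a b c d o : ℂ) :
    crossRatio (a - o) (b - o) (c - o) (d - o) = crossRatio a b c d := by
  simp only [crossRatio, sub_sub_sub_cancel_right]

theorem conj_crossRatio (a b c d : ℂ) :
    starRingEnd ℂ (crossRatio a b c d) =
      crossRatio (starRingEnd ℂ a) (starRingEnd ℂ b) (starRingEnd ℂ c) (starRingEnd ℂ d) := by
  simp [crossRatio]

theorem crossRatio_const_div {k : ℂ} (hk : k ≠ 0) {a b c d : ℂ} (ha : a ≠ 0) (hb : b ≠ 0)
    (hc : c ≠ 0) (hd : d ≠ 0) :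
    crossRatio (k / a) (k / b) (k / c) (k / d) = crossRatio a b c d := by
  have := crossRatio_moebius (α := 0) (β := k) (γ := 1) (δ := 0) (by simpa using hk)
    (a := a) (b := b) (c := c) (d := d) (by simpa) (by simpa) (by simpa) (by simpa)
  simpa only [zero_mul, zero_add, one_mul, add_zero] using this

theorem crossRatio_im_eq_zero_of_mem_sphere {o a b c d : ℂ} {ρ : ℝ} (ha : a ∈ sphere o ρ)
    (hb : b ∈ sphere o ρ) (hc : c ∈ sphere o ρ) (hd : d ∈ sphere o ρ) :
    (crossRatio a b c d).im = 0 := by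
  rcases (dist_nonneg.trans_eq ha).eq_or_lt with hρ | hρ
  · simp only [Metric.mem_sphere, ← hρ, dist_eq_zero] at ha hb hc hd
    simp [ha, hb, hc, hd, crossRatio]
  -- On the circle, conjugation is the Möbius map `z - o ↦ ρ² / (z - o)`.
  have hconj : ∀ z ∈ sphere o ρ, starRingEnd ℂ (z - o) = (ρ ^ 2 : ℂ) / (z - o) := by
    intro z hz
    have hz0 : z - o ≠ 0 := by
      rw [sub_ne_zero]; rintro rfl; simp [hρ.ne] at hz
    rw [eq_div_iff hz0, ← Complex.normSq_eq_conj_mul_self, Complex.normSq_eq_norm_sq,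
      ← dist_eq_norm, mem_sphere.1 hz]
    push_cast; ring
  have hne : ∀ z ∈ sphere o ρ, z - o ≠ 0 := fun z hz h => by
    simp [sub_eq_zero.1 h, hρ.ne] at hz
  rw [← Complex.conj_eq_iff_im, ← crossRatio_sub_const a b c d o, conj_crossRatio,
    hconj a ha, hconj b hb, hconj c hc, hconj d hd,
    crossRatio_const_div (by exact_mod_cast (pow_pos hρ 2).ne') (hne a ha) (hne b hb)
      (hne c hc) (hne d hd)]

theorem crossRatio_im_eq_zero_of_collinear {s : Set ℂ} (h : Collinear ℝ s) {a b c d : ℂ}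
    (ha : a ∈ s) (hb : b ∈ s) (hc : c ∈ s) (hd : d ∈ s) : (crossRatio a b c d).im = 0 := by
  obtain ⟨p, v, hv⟩ := (collinear_iff_exists_forall_eq_smul_vadd s).1 h
  obtain ⟨ta, rfl⟩ := hv a ha
  obtain ⟨tb, rfl⟩ := hv b hb
  obtain ⟨tc, rfl⟩ := hv c hc
  obtain ⟨td, rfl⟩ := hv d hd
  by_cases hv0 : v = 0
  · simp [hv0, crossRatio]
  have := crossRatio_moebius (α := v) (β := p) (γ := 0) (δ := 1) (by simpa using hv0)
    (a := ta) (b := tb) (c := tc) (d := td) (by simp) (by simp) (by simp) (by simp)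
  simp only [zero_mul, zero_add, div_one] at this
  simp only [vadd_eq_add, Complex.real_smul, mul_comm _ v]
  rw [this, crossRatio]
  norm_cast

theorem crossRatio_eq_div_inv_sub {A X P B : ℂ} (hX : X ≠ A) (hP : P ≠ A) (hB : B ≠ A) :
    crossRatio A X P B = ((B - A)⁻¹ - (X - A)⁻¹) / ((P - A)⁻¹ - (X - A)⁻¹) := by
  have hX' := sub_ne_zero.2 hX
  have hP' := sub_ne_zero.2 hP
  have hB' := sub_ne_zero.2 hB
  by_cases hXP : X = P
  · simp [crossRatio, hXP]
  have hXP' : (P - A)⁻¹ - (X - A)⁻¹ ≠ 0 := by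
    rwa [sub_ne_zero, Ne, inv_inj, sub_left_inj, eq_comm]
  rw [crossRatio, eq_div_iff hXP']
  field_simp
  ring

/-- If `b`, `x`, `p` are collinear with `x` on the line `Re (c w) = α₁` and `p` on the parallel line
`Re (c w) = α₂`, then `p - b = k (x - b)` with `k = (β - α₂) / (β - α₁)`, `β = Re (c b)`; stated
multiplied out, it holds also when `b` lies on one of the lines. -/
theorem mul_sub_eq_mul_sub_of_im_div_eq_zero {c b x p : ℂ} {α₁ α₂ : ℝ} (hx : (c * x).re = α₁)
    (hp : (c * p).re = α₂) (hα : α₁ ≠ α₂) (him : ((b - x) / (p - x)).im = 0) :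
    (((c * b).re - α₂ : ℝ) : ℂ) * (x - b) = (((c * b).re - α₁ : ℝ) : ℂ) * (p - b) := by
  have hpx : p - x ≠ 0 := fun h => hα (by rw [← hx, ← hp, sub_eq_zero.1 h])
  set t := ((b - x) / (p - x)).re
  have hbx : b - x = t * (p - x) := by
    rw [← div_eq_iff hpx]
    exact Complex.ext (by simp [t]) (by simp [him])
  have hre : (c * b).re - α₁ = t * (α₂ - α₁) := by
    have := congrArg (fun w => (c * w).re) hbx
    simp only [mul_sub, Complex.sub_re, mul_left_comm c (t : ℂ), Complex.re_ofReal_mul] at this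
    rw [← hx, ← hp, this, mul_sub]
  have hre' : (((c * b).re - α₁ : ℝ) : ℂ) = t * (α₂ - α₁) := by exact_mod_cast hre
  push_cast at hre' ⊢
  linear_combination (x - p) * hre' + ((α₂ : ℂ) - α₁) * hbx

theorem inv_sub_eq_of_concyclic_or_collinear {A X B P c : ℂ} {α₁ α₂ : ℝ} (hXA : X ≠ A)
    (hPA : P ≠ A) (hBA : B ≠ A) (hX : (c * (X - A)⁻¹).re = α₁) (hP : (c * (P - A)⁻¹).re = α₂)
    (hα : α₁ ≠ α₂)
    (h : Concyclic ({A, X, B, P} : Set ℂ) ∨ Collinear ℝ ({A, X, B, P} : Set ℂ)) :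
    (((c * (B - A)⁻¹).re - α₂ : ℝ) : ℂ) * ((X - A)⁻¹ - (B - A)⁻¹)
      = (((c * (B - A)⁻¹).re - α₁ : ℝ) : ℂ) * ((P - A)⁻¹ - (B - A)⁻¹) := by
  have him : (crossRatio A X P B).im = 0 := by
    rcases h with ⟨⟨o, ρ, ho⟩, -⟩ | h
    · exact crossRatio_im_eq_zero_of_mem_sphere (ho A (by simp)) (ho X (by simp))
        (ho P (by simp)) (ho B (by simp))
    · exact crossRatio_im_eq_zero_of_collinear h (by simp) (by simp) (by simp) (by simp)
  rw [crossRatio_eq_div_inv_sub hXA hPA hBA] at him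
  exact mul_sub_eq_mul_sub_of_im_div_eq_zero hX hP hα him

/-- For `α ≠ 0`, the circle through `A` that inversion at `A`, `w = (z - A)⁻¹`, maps to the line
`Re (c * w) = α`. -/
def invLine (A c : ℂ) (α : ℝ) : Set ℂ := {z | z = A ∨ (c * (z - A)⁻¹).re = α}

theorem dist_eq_dist_iff_re_mul_inv_sub {O A z : ℂ} (hz : z ≠ A) :
    dist z O = dist A O ↔ ((O - A) * (z - A)⁻¹).re = 1 / 2 := by
  have hn : (z.re - A.re) ^ 2 + (z.im - A.im) ^ 2 ≠ 0 := by
    simpa [Complex.normSq_apply, sq] using (Complex.normSq_pos.2 (sub_ne_zero.2 hz)).ne'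
  rw [dist_eq_norm, dist_eq_norm, ← sq_eq_sq₀ (norm_nonneg _) (norm_nonneg _),
    ← Complex.normSq_eq_norm_sq, ← Complex.normSq_eq_norm_sq, Complex.mul_re, Complex.inv_re,
    Complex.inv_im, Complex.normSq_apply]
  simp only [Complex.normSq_apply, Complex.sub_re, Complex.sub_im]
  field_simp
  constructor <;> intro h <;> linarith

theorem sphere_eq_invLine (O A : ℂ) : sphere O (dist A O) = invLine A (O - A) (1 / 2) := by
  ext z
  by_cases hz : z = A
  · simp [hz, invLine, dist_eq_norm]
  · simp only [Metric.mem_sphere, invLine, Set.mem_ofPred_eq, hz, false_or,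
      dist_eq_dist_iff_re_mul_inv_sub hz]

theorem invLine_real_mul (A c : ℂ) {s : ℝ} (hs : s ≠ 0) (α : ℝ) :
    invLine A (s * c) α = invLine A c (α / s) := by
  ext z
  simp only [invLine, Set.mem_ofPred_eq, mul_assoc, Complex.re_ofReal_mul, eq_div_iff hs,
    mul_comm s]

theorem sub_eq_real_mul_sub_of_dist_eq_sub {O₁ O₂ A : ℂ} {r R : ℝ} (hr : 0 < r)
    (hA₁ : dist O₁ A = r) (hA₂ : dist O₂ A = R) (htan : dist O₁ O₂ = R - r) :
    O₂ - A = (R / r : ℝ) * (O₁ - A) := by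
  have hray : SameRay ℝ (O₁ - A) (O₂ - O₁) := by
    rw [sameRay_iff_norm_add, sub_add_sub_cancel', ← dist_eq_norm, ← dist_eq_norm,
      ← dist_eq_norm, hA₁, hA₂, dist_comm, htan]
    ring
  have h := ((SameRay.refl (O₁ - A)).add_right hray).norm_smul_eq
  rw [sub_add_sub_cancel', ← dist_eq_norm, ← dist_eq_norm, hA₁, hA₂, Complex.real_smul,
    Complex.real_smul] at h
  rw [Complex.ofReal_div, div_mul_eq_mul_div, ← h, mul_div_cancel_left₀]
  exact_mod_cast hr.ne'

theorem sphere_eq_invLine_of_dist_eq_sub {O₁ O₂ A : ℂ} {r R : ℝ} (hr : 0 < r)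
    (hA₁ : dist O₁ A = r) (hA₂ : dist O₂ A = R) (htan : dist O₁ O₂ = R - r) :
    sphere O₂ R = invLine A (O₁ - A) (r / (2 * R)) := by
  have hR : 0 < R := by linarith [dist_nonneg.trans_eq htan]
  have hsphere : sphere O₂ R = sphere O₂ (dist A O₂) := by rw [dist_comm, hA₂]
  rw [hsphere, sphere_eq_invLine, sub_eq_real_mul_sub_of_dist_eq_sub hr hA₁ hA₂ htan,
    invLine_real_mul _ _ (by positivity)]
  congr 1
  field_simp

theorem exists_mem_invLine_ne {c : ℂ} (hc : c ≠ 0) {α : ℝ} (hα : α ≠ 0) (A B : ℂ) :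
    ∃ z ∈ invLine A c α, z ≠ A ∧ z ≠ B := by
  have hmem : ∀ s : ℝ, A + c / (α + s * Complex.I) ∈ invLine A c α := fun s => by
    right
    rw [add_sub_cancel_left, inv_div, mul_div_cancel₀ _ hc]
    simp
  have hden : ∀ s : ℝ, (α : ℂ) + s * Complex.I ≠ 0 := fun s h =>
    hα (by simpa using congrArg Complex.re h)
  have hne : ∀ s : ℝ, A + c / (α + s * Complex.I) ≠ A := fun s => by
    simpa [hc] using hden s
  by_cases h0 : A + c / (α + (0 : ℝ) * Complex.I) = B
  · refine ⟨_, hmem 1, hne 1, ?_⟩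
    rw [← h0, Ne, add_right_inj, div_eq_div_iff (hden 1) (hden 0), mul_right_inj' hc]
    simp [Complex.ext_iff]
  · exact ⟨_, hmem 0, hne 0, h0⟩

/-- In the coordinate `w = (z - A)⁻¹` this is the homothety `w ↦ b + k (w - b)`. -/
def homothetyConj (A b k : ℂ) (z : ℂ) : ℂ := A + (z - A) / (k + (1 - k) * b * (z - A))

section homothetyConj

variable {A b k z : ℂ}

@[simp]
theorem homothetyConj_self : homothetyConj A b k A = A := by
  simp [homothetyConj]

theorem inv_sub_homothetyConj (hz : z ≠ A) :
    (homothetyConj A b k z - A)⁻¹ = b + k * ((z - A)⁻¹ - b) := by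
  have := sub_ne_zero.2 hz
  rw [homothetyConj, add_sub_cancel_left, inv_div]
  field_simp
  ring

theorem homothetyConj_inv_homothetyConj (hk : k ≠ 0) (hz : k + (1 - k) * b * (z - A) ≠ 0) :
    homothetyConj A b k⁻¹ (homothetyConj A b k z) = z := by
  rcases eq_or_ne z A with rfl | hzA
  · simp
  have hTz : homothetyConj A b k z ≠ A := by
    rw [Ne, ← sub_eq_zero, homothetyConj, add_sub_cancel_left]
    exact div_ne_zero (sub_ne_zero.2 hzA) hz
  rw [← sub_left_inj (a := A), ← inv_inj, inv_sub_homothetyConj hTz, inv_sub_homothetyConj hzA]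
  field_simp
  ring

theorem crossRatio_homothetyConj (hk : k ≠ 0) {p q s u : ℂ}
    (hp : k + (1 - k) * b * (p - A) ≠ 0) (hq : k + (1 - k) * b * (q - A) ≠ 0)
    (hs : k + (1 - k) * b * (s - A) ≠ 0) (hu : k + (1 - k) * b * (u - A) ≠ 0) :
    crossRatio (homothetyConj A b k p) (homothetyConj A b k q) (homothetyConj A b k s)
      (homothetyConj A b k u) = crossRatio p q s u := by
  set m := (1 - k) * b
  have hmoeb : ∀ z, k + m * (z - A) ≠ 0 → homothetyConj A b k z
      = ((1 + A * m) * z + (A * k - A - A ^ 2 * m)) / (m * z + (k - m * A)) := by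
    intro z hz
    rw [homothetyConj, eq_div_iff fun h => hz (by linear_combination h),
      show m * z + (k - m * A) = k + m * (z - A) by ring, add_mul, div_mul_cancel₀ _ hz]
    ring
  rw [hmoeb p hp, hmoeb q hq, hmoeb s hs, hmoeb u hu]
  exact crossRatio_moebius (by ring_nf; exact hk) (fun h => hp (by linear_combination h))
    (fun h => hq (by linear_combination h)) (fun h => hs (by linear_combination h))
    (fun h => hu (by linear_combination h))

end homothetyConj

section invLine

open Set

variable {A b c : ℂ} {α₁ α₂ k : ℝ} (hk : (c * b).re - α₂ = k * ((c * b).re - α₁))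
include hk

theorem re_mul_inv_sub_homothetyConj {z : ℂ} (hzA : z ≠ A) (hz : (c * (z - A)⁻¹).re = α₁) :
    (c * (homothetyConj A b k z - A)⁻¹).re = α₂ := by
  rw [inv_sub_homothetyConj hzA, mul_add, mul_left_comm, mul_sub, Complex.add_re,
    Complex.re_ofReal_mul, Complex.sub_re, hz]
  linear_combination hk

theorem mapsTo_homothetyConj_invLine :
    MapsTo (homothetyConj A b k) (invLine A c α₁) (invLine A c α₂) := by
  rintro z (rfl | hz)
  · simp [invLine]
  rcases eq_or_ne z A with rfl | hzA
  · simp [invLine]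
  exact Or.inr (re_mul_inv_sub_homothetyConj hk hzA hz)

theorem homothetyConj_denom_ne_zero (hk0 : k ≠ 0) (hα₂ : α₂ ≠ 0) {z : ℂ}
    (hz : z ∈ invLine A c α₁) : (k : ℂ) + (1 - k) * b * (z - A) ≠ 0 := by
  rcases eq_or_ne z A with rfl | hzA
  · simpa using hk0
  have hre := re_mul_inv_sub_homothetyConj hk hzA (hz.resolve_left hzA)
  have hinv : (homothetyConj A b k z - A)⁻¹ ≠ 0 := fun h => hα₂ (by simp [← hre, h])
  rw [inv_sub_homothetyConj hzA] at hinv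
  convert mul_ne_zero (sub_ne_zero.2 hzA) hinv using 1
  field_simp [sub_ne_zero.2 hzA]
  ring

theorem preservesCrossRatioOn_homothetyConj_invLine (hk0 : k ≠ 0) (hα₂ : α₂ ≠ 0) :
    PreservesCrossRatioOn (homothetyConj A b k) (invLine A c α₁) :=
  fun _p hp _q hq _s hs _u hu => crossRatio_homothetyConj (by exact_mod_cast hk0)
    (homothetyConj_denom_ne_zero hk hk0 hα₂ hp) (homothetyConj_denom_ne_zero hk hk0 hα₂ hq)
    (homothetyConj_denom_ne_zero hk hk0 hα₂ hs) (homothetyConj_denom_ne_zero hk hk0 hα₂ hu)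

theorem leftInvOn_homothetyConj_invLine (hk0 : k ≠ 0) (hα₂ : α₂ ≠ 0) :
    LeftInvOn (homothetyConj A b (k⁻¹ : ℝ)) (homothetyConj A b k) (invLine A c α₁) :=
  fun _z hz => by
  rw [Complex.ofReal_inv]
  exact homothetyConj_inv_homothetyConj (by exact_mod_cast hk0)
    (homothetyConj_denom_ne_zero hk hk0 hα₂ hz)

theorem invOn_homothetyConj_invLine (hk0 : k ≠ 0) (hα₁ : α₁ ≠ 0) (hα₂ : α₂ ≠ 0) :
    InvOn (homothetyConj A b (k⁻¹ : ℝ)) (homothetyConj A b k) (invLine A c α₁)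
      (invLine A c α₂) := by
  have hk' : (c * b).re - α₁ = k⁻¹ * ((c * b).re - α₂) := by
    rw [hk, inv_mul_cancel_left₀ hk0]
  refine ⟨leftInvOn_homothetyConj_invLine hk hk0 hα₂, ?_⟩
  simpa using leftInvOn_homothetyConj_invLine hk' (inv_ne_zero hk0) hα₁

theorem IsCircleInvolution.homothetyConj_comp {f : ℂ → ℂ}
    (hf : IsCircleInvolution (invLine A c α₁) f) (hk0 : k ≠ 0) (hα₁ : α₁ ≠ 0) (hα₂ : α₂ ≠ 0) :
    IsCircleInvolution (invLine A c α₂)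
      (homothetyConj A b k ∘ f ∘ homothetyConj A b (k⁻¹ : ℝ)) :=
  hf.conj (mapsTo_homothetyConj_invLine hk)
    (mapsTo_homothetyConj_invLine (by rw [hk, inv_mul_cancel_left₀ hk0]))
    (invOn_homothetyConj_invLine hk hk0 hα₁ hα₂)
    (preservesCrossRatioOn_homothetyConj_invLine hk hk0 hα₂)

end invLine

theorem exists_isCircleInvolution_of_inv_sub_eq {A b c : ℂ} {α₁ α₂ : ℝ} (hα₁ : α₁ ≠ 0)
    (hα₂ : α₂ ≠ 0) (hb : (c * b).re ≠ α₁) {f Y : ℂ → ℂ}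
    (hf : IsCircleInvolution (invLine A c α₁) f)
    (hY : ∀ X ∈ invLine A c α₁, X ≠ A → (((c * b).re - α₂ : ℝ) : ℂ) * ((X - A)⁻¹ - b)
      = (((c * b).re - α₁ : ℝ) : ℂ) * ((Y X - A)⁻¹ - b)) :
    ∃ g : ℂ → ℂ, IsCircleInvolution (invLine A c α₂) g ∧
      ∀ X ∈ invLine A c α₁, X ≠ A → f X ≠ A → g (Y X) = Y (f X) := by
  have hb' : (((c * b).re - α₁ : ℝ) : ℂ) ≠ 0 := by exact_mod_cast sub_ne_zero.2 hb
  rcases eq_or_ne (c * b).re α₂ with hβ | hβ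
  · have hconst : ∀ X ∈ invLine A c α₁, X ≠ A → Y X = A + b⁻¹ := fun X hX hXA => by
      have h0 : (((c * b).re - α₂ : ℝ) : ℂ) = 0 := by simp [hβ]
      have := hY X hX hXA
      rw [h0, zero_mul, eq_comm, mul_eq_zero, sub_eq_zero] at this
      rw [← this.resolve_left hb', inv_inv, add_sub_cancel]
    refine ⟨id, ⟨fun X hX => hX, fun _ _ => rfl, fun _ _ _ _ _ _ _ _ => rfl⟩,
      fun X hX hXA hfXA => ?_⟩
    rw [id, hconst X hX hXA, hconst _ (hf.1 X hX) hfXA]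
  set k := ((c * b).re - α₂) / ((c * b).re - α₁)
  have hk : (c * b).re - α₂ = k * ((c * b).re - α₁) := (div_mul_cancel₀ _ (sub_ne_zero.2 hb)).symm
  have hk0 : k ≠ 0 := div_ne_zero (sub_ne_zero.2 hβ) (sub_ne_zero.2 hb)
  have hYT : ∀ X ∈ invLine A c α₁, X ≠ A → Y X = homothetyConj A b k X := fun X hX hXA => by
    rw [← sub_left_inj (a := A), ← inv_inj, inv_sub_homothetyConj hXA]
    apply mul_left_cancel₀ hb'
    have hkc : (((c * b).re - α₂ : ℝ) : ℂ) = k * (((c * b).re - α₁ : ℝ) : ℂ) := by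
      exact_mod_cast hk
    linear_combination -hY X hX hXA + ((X - A)⁻¹ - b) * hkc
  refine ⟨_, hf.homothetyConj_comp hk hk0 hα₁ hα₂, fun X hX hXA hfXA => ?_⟩
  rw [hYT X hX hXA, hYT _ (hf.1 X hX) hfXA, Function.comp_apply, Function.comp_apply,
    (invOn_homothetyConj_invLine hk hk0 hα₁ hα₂).1 hX]

/-- Lemma 4 of the paper: transporting an involution from `ω` to `Ω` through circles
`(A X B)` yields an involution of `Ω`. -/
theorem involution_transfer (O₁ O₂ A B : ℂ) (r R : ℝ)
    (hr : 0 < r) (hR : r < R)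
    (hA₁ : dist O₁ A = r) (hA₂ : dist O₂ A = R) (htan : dist O₁ O₂ = R - r)
    (hB : B ≠ A)
    (f : ℂ → ℂ) (hf : IsCircleInvolution (sphere O₁ r) f)
    (Y : ℂ → ℂ)
    (hY : ∀ X ∈ sphere O₁ r, X ≠ A →
      Y X ∈ sphere O₂ R ∧ Y X ≠ A ∧
      (Concyclic ({A, X, B, Y X} : Set ℂ) ∨ Collinear ℝ ({A, X, B, Y X} : Set ℂ))) :
    ∃ g : ℂ → ℂ, IsCircleInvolution (sphere O₂ R) g ∧
      ∀ X ∈ sphere O₁ r, X ≠ A → f X ≠ A → g (Y X) = Y (f X) := by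
  have hω : sphere O₁ r = invLine A (O₁ - A) (1 / 2) := by
    rw [← sphere_eq_invLine, dist_comm, hA₁]
  have hΩ := sphere_eq_invLine_of_dist_eq_sub hr hA₁ hA₂ htan
  have hR0 : 0 < R := hr.trans hR
  have hρ : (1 / 2 : ℝ) ≠ r / (2 * R) := by
    rw [Ne, eq_div_iff (by positivity)]
    linarith
  have hYw : ∀ X ∈ invLine A (O₁ - A) (1 / 2), X ≠ A →
      ((((O₁ - A) * (B - A)⁻¹).re - r / (2 * R) : ℝ) : ℂ) * ((X - A)⁻¹ - (B - A)⁻¹)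
        = ((((O₁ - A) * (B - A)⁻¹).re - 1 / 2 : ℝ) : ℂ) * ((Y X - A)⁻¹ - (B - A)⁻¹) := by
    intro X hX hXA
    obtain ⟨hP, hPA, hcyc⟩ := hY X (hω ▸ hX) hXA
    exact inv_sub_eq_of_concyclic_or_collinear hXA hPA hB (hX.resolve_left hXA)
      ((hΩ ▸ hP).resolve_left hPA) hρ hcyc
  -- If `B` lay on `ω`, every circle `(A X B)` would be `ω` itself, which meets `Ω` only at `A`.
  have hBω : ((O₁ - A) * (B - A)⁻¹).re ≠ 1 / 2 := by
    intro hβ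
    obtain ⟨X, hX, hXA, hXB⟩ :=
      exists_mem_invLine_ne (sub_ne_zero.2 (dist_pos.1 (hA₁ ▸ hr))) (α := 1 / 2) (by norm_num) A B
    have := hYw X hX hXA
    rw [hβ, sub_self, Complex.ofReal_zero, zero_mul, mul_eq_zero, Complex.ofReal_eq_zero,
      sub_eq_zero, sub_eq_zero, inv_inj, sub_left_inj] at this
    exact hXB (this.resolve_left hρ)
  rw [hω] at hf ⊢
  rw [hΩ]
  exact exists_isCircleInvolution_of_inv_sub_eq (by norm_num) (by positivity) hBω hf hYw
end
end

section
/- Let Ω be a circle of radius R with chord BC, let m be the line parallel to BC at distance R from BC (on a chosen side), and let O be the center of Ω. Let ω be a circle with center O₁ tangent to line BC at D (on the chosen side of BC) and internally tangent to Ω. Then O₁O equals the distance from O₁ to m; consequently O₁ lies on the parabola with focus O and directrix m, and B and C also lie on this parabola. -/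
open EuclideanGeometry Metric AffineSubspace Real RealInnerProductSpace

noncomputable section

/-! The directrix `m` is the line `BC` translated by `R • n`, with `n` a unit normal of `BC`.
Hence a point `X + t • n` with `X` on `BC` has foot `X + R • n` on `m` and lies at distance
`|t - R|` from it. For `O₁ = D + r • n` this is `R - r = O₁O` by internal tangency, and for
`B` and `C` (where `t = 0`) it is the radius `R = OB = OC`. -/

theorem infDist_eq_dist_of_mem_of_vsub_mem_orthogonal {V P : Type*} [NormedAddCommGroup V]
    [InnerProductSpace ℝ V] [MetricSpace P] [NormedAddTorsor V P] {s : AffineSubspace ℝ P}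
    [s.direction.HasOrthogonalProjection] {p q : P} (hq : q ∈ s) (hpq : p -ᵥ q ∈ s.directionᗮ) :
    infDist p s = dist p q := by
  have : Nonempty s := ⟨⟨q, hq⟩⟩
  rw [← dist_orthogonalProjection_eq_infDist, coe_orthogonalProjection_eq_iff_mem.2 ⟨hq, hpq⟩]

theorem add_mem_lineTh_add {B C X : Pt} (v : Pt) (hX : X ∈ lineTh B C) :
    X + v ∈ lineTh (B + v) (C + v) := by
  have h := (AffineSubspace.vadd_mem_pointwise_vadd_iff (v := v)).2 hX
  rw [lineTh, AffineSubspace.pointwise_vadd_span] at h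
  simpa [lineTh, Set.vadd_set_insert, add_comm] using h

theorem mem_direction_lineTh_orthogonal {A A' n : Pt} (h : ⟪n, A' - A⟫ = 0) :
    n ∈ (lineTh A A').directionᗮ := by
  rw [lineTh, direction_affineSpan, vectorSpan_pair_rev,
    Submodule.mem_orthogonal_singleton_iff_inner_left]
  simpa using h

theorem infDist_add_smul_lineTh_add_smul {B C X n : Pt} (hX : X ∈ lineTh B C) (hn : ‖n‖ = 1)
    (hperp : ⟪n, C - B⟫ = 0) (t R : ℝ) :
    infDist (X + t • n) (lineTh (B + R • n) (C + R • n) : Set Pt) = |t - R| := by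
  have hdir : ⟪n, (C + R • n) - (B + R • n)⟫ = 0 := by simpa using hperp
  have hfoot : X + t • n - (X + R • n) = (t - R) • n := by rw [sub_smul]; abel
  rw [infDist_eq_dist_of_mem_of_vsub_mem_orthogonal (add_mem_lineTh_add _ hX), dist_eq_norm,
    hfoot, norm_smul, hn, mul_one, Real.norm_eq_abs]
  rw [vsub_eq_sub, hfoot]
  exact Submodule.smul_mem _ _ (mem_direction_lineTh_orthogonal hdir)

theorem centers_on_parabola_general (O B C n O₁ D : Pt) (R r : ℝ)
    (hOB : dist O B = R) (hOC : dist O C = R)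
    (hn : ‖n‖ = 1) (hperp : (inner ℝ n (C - B) : ℝ) = 0)
    (hrR : r < R)
    (hD : TangentAt O₁ r B C D) (hO₁ : O₁ = D + r • n)
    (hint : dist O₁ O = R - r) :
    infDist O₁ (lineTh (B + R • n) (C + R • n) : Set Pt) = dist O₁ O ∧
    infDist B (lineTh (B + R • n) (C + R • n) : Set Pt) = dist B O ∧
    infDist C (lineTh (B + R • n) (C + R • n) : Set Pt) = dist C O := by
  have hR : 0 ≤ R := hOB ▸ dist_nonneg
  have infDist_directrix_of_mem_BC {X : Pt} (hX : X ∈ lineTh B C) :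
      infDist X (lineTh (B + R • n) (C + R • n) : Set Pt) = R := by
    simpa [abs_of_nonneg hR] using infDist_add_smul_lineTh_add_smul hX hn hperp 0 R
  refine ⟨?_, ?_, ?_⟩
  · rw [hO₁, infDist_add_smul_lineTh_add_smul hD.1 hn hperp, ← hO₁, hint, abs_sub_comm,
      abs_of_pos (sub_pos.2 hrR)]
  · rw [infDist_directrix_of_mem_BC (left_mem_affineSpan_pair ℝ B C), dist_comm, hOB]
  · rw [infDist_directrix_of_mem_BC (right_mem_affineSpan_pair ℝ B C), dist_comm, hOC]

/-- Centers of circles tangent to a chord and internally tangent to the circle lie on a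
parabola with focus the center and directrix the parallel line at distance `R`. -/
theorem centers_on_parabola (O B C n O₁ D : Pt) (R r : ℝ)
    (hBC : B ≠ C) (hR : 0 < R)
    (hOB : dist O B = R) (hOC : dist O C = R)
    (hn : ‖n‖ = 1) (hperp : (inner ℝ n (C - B) : ℝ) = 0)
    (hr : 0 < r) (hrR : r < R)
    (hD : TangentAt O₁ r B C D) (hO₁ : O₁ = D + r • n)
    (hint : dist O₁ O = R - r) :
    infDist O₁ (lineTh (B + R • n) (C + R • n) : Set Pt) = dist O₁ O ∧
    infDist B (lineTh (B + R • n) (C + R • n) : Set Pt) = dist B O ∧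
    infDist C (lineTh (B + R • n) (C + R • n) : Set Pt) = dist C O :=
  centers_on_parabola_general O B C n O₁ D R r hOB hOC hn hperp hrR hD hO₁ hint
end
end

section
/- Let a projective involution act on the points of a parabola 𝒫 (viewed as a conic in the projective plane). Then there is a fixed point Q such that for every pair (O₁, O₂) of points exchanged by the involution, the line O₁O₂ passes through Q. -/
/-! The parameters `t, t'` of an involutive pair satisfy the symmetric relation
`c t t' - a (t + t') = b` (this is where trace zero enters), while the chord of `y = x²`
through `(t, t²)` and `(t', t'²)` is the line `y = (t + t') x - t t'`.  Comparing the two,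
every chord passes through `(a / c, -b / c)` when `c ≠ 0`; when `c = 0` the sum `t + t' = -b / a`
is constant, so all chords have the common slope `-b / a`. -/

section Parabola

variable {K : Type*} [Field K]

theorem parabola_sub_parabola (t t' : K) :
    ((t', t' ^ 2) : K × K) - (t, t ^ 2) = (t' - t) • ((1, t + t') : K × K) := by
  ext <;> simp only [Prod.fst_sub, Prod.snd_sub, Prod.smul_fst, Prod.smul_snd, smul_eq_mul] <;> ring

theorem collinear_parabola_chord {t t' x y : K} (h : y = (t + t') * x - t * t') :
    Collinear K ({(t, t ^ 2), (t', t' ^ 2), (x, y)} : Set (K × K)) := by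
  rw [collinear_iff_of_mem (p₀ := (t, t ^ 2)) (by simp)]
  refine ⟨(1, t + t'), ?_⟩
  simp only [Set.mem_insert_iff, Set.mem_singleton_iff]
  rintro p (rfl | rfl | rfl)
  · exact ⟨0, by simp⟩
  · exact ⟨t' - t, by rw [← parabola_sub_parabola, vadd_eq_add, sub_add_cancel]⟩
  · refine ⟨x - t, ?_⟩
    subst h
    ext <;> simp only [vadd_eq_add, Prod.fst_add, Prod.snd_add, Prod.smul_fst, Prod.smul_snd,
      smul_eq_mul] <;> ring

theorem mobius_pair_relation_of_trace_eq_zero {a b c d t : K} (htr : d = -a)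
    (ht : c * t + d ≠ 0) :
    c * t * ((a * t + b) / (c * t + d)) - a * (t + (a * t + b) / (c * t + d)) = b := by
  subst htr
  field_simp
  ring

end Parabola

/-- **Frégier's theorem for the parabola.**  A projective involution of the parabola
`y = x²` is given in the parameter `t` by a Möbius map `t ↦ (a t + b)/(c t + d)` with
nonzero determinant and trace zero (`d = -a`).  All chords joining involutive pairs pass
through a single point of the projective plane: either a fixed affine point `Q`, or (if
the Frégier point is at infinity) the chords are all parallel to a fixed direction. -/
theorem fregier_parabola (a b c d : ℝ) (hdet : a * d - b * c ≠ 0) (htr : d = -a) :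
    (∃ Q : ℝ × ℝ, ∀ t : ℝ, c * t + d ≠ 0 →
      Collinear ℝ ({(t, t ^ 2), ((a * t + b) / (c * t + d),
        ((a * t + b) / (c * t + d)) ^ 2), Q} : Set (ℝ × ℝ))) ∨
    (∃ v : ℝ × ℝ, v ≠ 0 ∧ ∀ t : ℝ, c * t + d ≠ 0 →
      ∃ s : ℝ, ((a * t + b) / (c * t + d), ((a * t + b) / (c * t + d)) ^ 2) - ((t, t ^ 2) : ℝ × ℝ)
        = s • v) := by
  rcases ne_or_eq c 0 with hc | rfl
  · refine .inl ⟨(a / c, -b / c), fun t ht => collinear_parabola_chord ?_⟩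
    have hpair := mobius_pair_relation_of_trace_eq_zero (b := b) htr ht
    generalize (a * t + b) / (c * t + d) = t' at hpair ⊢
    field_simp
    linear_combination hpair
  · have ha : a ≠ 0 := by rintro rfl; simp at hdet
    refine .inr ⟨(1, -b / a), by simp, fun t ht => ?_⟩
    have hpair := mobius_pair_relation_of_trace_eq_zero (b := b) htr ht
    generalize (a * t + b) / (0 * t + d) = t' at hpair ⊢
    have hsum : t + t' = -b / a := by field_simp; linear_combination -hpair
    exact ⟨t' - t, by rw [parabola_sub_parabola, hsum]⟩
end

section
/- Let Γ be a circle with chord BC, and let ω be a circle internally tangent to Γ at P and tangent to line BC at E, on a given side of BC. Let M be the midpoint of the arc BC of Γ on the opposite side of BC from ω. Then line MB is tangent at B to the circumcircle of triangle BEP, and hence MB² = ME · MP. -/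
/-!
The tangency point `E` is the foot of the perpendicular from the centre `W` of `ω` to `BC`, so
`E - W` is normal to `BC`, and so is `M - O`. In the plane, with `M` and `W` on opposite sides of
`BC`, this forces `M - O = (R / r) • (E - W)`. Since `W` divides `OP` in the ratio `(R - r) : r`,
the homothety at `P` with ratio `R / r` maps `ω` to `Γ` and `E` to `M`, so `E` divides `MP` with
`ME = k · MP`, `k = 1 - r / R`. As `BE ⊥ OM`, expanding around `O` gives
`MB² = k · MP² = ME · MP`. The power of `M` with respect to any circle through `E` and `P` is
also `k · MP² = MB²`, so `O'B ⊥ MB` by Pythagoras.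
-/

open EuclideanGeometry Metric AffineSubspace Real RealInnerProductSpace

noncomputable section

section
variable {V : Type*} [NormedAddCommGroup V] [InnerProductSpace ℝ V]

theorem inner_sub_eq_zero_of_forall_dist_le {w e u : V}
    (h : ∀ t : ℝ, dist w e ≤ dist w (t • u + e)) : ⟪w - e, u⟫ = 0 := by
  rcases eq_or_ne u 0 with rfl | hu
  · exact inner_zero_right _
  have hu2 : 0 < ‖u‖ ^ 2 := by positivity
  -- the minimiser of the quadratic `t ↦ dist w (t • u + e) ^ 2`
  set t := ⟪w - e, u⟫ / ‖u‖ ^ 2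
  have ht : t * ‖u‖ ^ 2 = ⟪w - e, u⟫ := div_mul_cancel₀ _ hu2.ne'
  have key := pow_le_pow_left₀ dist_nonneg (h t) 2
  rw [dist_eq_norm, dist_eq_norm, add_comm, sub_add_eq_sub_sub, norm_sub_sq_real (w - e),
    real_inner_smul_right, norm_smul, mul_pow, Real.norm_eq_abs, sq_abs, ← ht] at key
  have ht0 : t ^ 2 * ‖u‖ ^ 2 = 0 := le_antisymm (by nlinarith) (by positivity)
  rw [← ht, pow_eq_zero_iff two_ne_zero |>.mp ((mul_eq_zero.mp ht0).resolve_right hu2.ne'),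
    zero_mul]

theorem exists_eq_smul_of_inner_eq_zero (hV : Module.finrank ℝ V = 2) {u v w : V}
    (hu : u ≠ 0) (hv : v ≠ 0) (hvu : ⟪v, u⟫ = 0) (hwu : ⟪w, u⟫ = 0) :
    ∃ c : ℝ, w = c • v := by
  have : Fact (Module.finrank ℝ V = 1 + 1) := ⟨hV⟩
  have hv' : v ∈ (ℝ ∙ u)ᗮ := Submodule.mem_orthogonal_singleton_iff_inner_left.mpr hvu
  have hw' : w ∈ (ℝ ∙ u)ᗮ := Submodule.mem_orthogonal_singleton_iff_inner_left.mpr hwu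
  obtain ⟨c, hc⟩ := (finrank_eq_one_iff_of_nonzero' (⟨v, hv'⟩ : (ℝ ∙ u)ᗮ)
    (by simpa using hv)).mp (Submodule.finrank_orthogonal_span_singleton hu) ⟨w, hw'⟩
  exact ⟨c, by simpa using congrArg Subtype.val hc.symm⟩

theorem AffineSubspace.SOppSide.inner_pos_of_inner_neg {s : AffineSubspace ℝ V} {x y p n : V}
    (h : s.SOppSide x y) (hp : p ∈ s) (hn : ∀ v ∈ s.direction, ⟪v, n⟫ = 0)
    (hy : ⟪y - p, n⟫ < 0) : 0 < ⟪x - p, n⟫ := by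
  obtain ⟨q, hq, ⟨t, ⟨ht0, ht1⟩, rfl⟩, hqx, hqy⟩ := h.exists_sbtw
  have ht0' : 0 < t := ht0.lt_of_ne (by rintro rfl; simp at hqx)
  have ht1' : t < 1 := ht1.lt_of_ne (by rintro rfl; simp at hqy)
  have hq0 : ⟪AffineMap.lineMap x y t - p, n⟫ = 0 := hn _ (vsub_mem_direction hq hp)
  rw [AffineMap.lineMap_apply_module',
    show t • (y - x) + x - p = (1 - t) • (x - p) + t • (y - p) by module, inner_add_left,
    real_inner_smul_left, real_inner_smul_left] at hq0
  nlinarith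

theorem EuclideanGeometry.Sphere.power_eq_mul_dist_sq {s : Sphere V} {p a b : V} {k : ℝ}
    (hk : k ≠ 1) (hab : a = AffineMap.lineMap p b k) (ha : a ∈ s) (hb : b ∈ s) :
    s.power p = k * dist p b ^ 2 := by
  have ha' := congrArg (· ^ 2) (mem_sphere.mp ha)
  have hb' := congrArg (· ^ 2) (mem_sphere.mp hb)
  simp only [dist_eq_norm, hab, AffineMap.lineMap_apply_module'] at ha' hb'
  rw [show k • (b - p) + p - s.center = (p - s.center) + k • (b - p) by abel, norm_add_sq_real,
    real_inner_smul_right, norm_smul, mul_pow, Real.norm_eq_abs, sq_abs] at ha'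
  rw [show b - s.center = (p - s.center) + (b - p) by abel, norm_add_sq_real] at hb'
  rw [power, dist_eq_norm, dist_eq_norm, norm_sub_rev p b]
  have : (k - 1) * (‖p - s.center‖ ^ 2 - s.radius ^ 2 - k * ‖b - p‖ ^ 2) = 0 := by
    linear_combination k * hb' - ha'
  exact sub_eq_zero.mp ((mul_eq_zero.mp this).resolve_left (sub_ne_zero.mpr hk))

theorem EuclideanGeometry.Sphere.dist_sq_eq_mul_dist_sq_of_inner_eq_zero {s : Sphere V}
    {m b p e : V} {k : ℝ} (hm : m ∈ s) (hb : b ∈ s) (hp : p ∈ s)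
    (he : e = AffineMap.lineMap m p k) (hWE_perp : ⟪e - b, m - s.center⟫ = 0) :
    dist m b ^ 2 = k * dist m p ^ 2 := by
  obtain ⟨x, rfl⟩ : ∃ x, x + s.center = m := ⟨m - s.center, sub_add_cancel _ _⟩
  obtain ⟨y, rfl⟩ : ∃ y, y + s.center = b := ⟨b - s.center, sub_add_cancel _ _⟩
  obtain ⟨z, rfl⟩ : ∃ z, z + s.center = p := ⟨p - s.center, sub_add_cancel _ _⟩
  simp only [mem_sphere, dist_eq_norm, add_sub_cancel_right] at hm hb hp
  rw [he, AffineMap.lineMap_apply_module', add_sub_cancel_right,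
    show k • (z + s.center - (x + s.center)) + (x + s.center) - (y + s.center)
      = x - y + k • (z - x) by module, inner_add_left, inner_sub_left, real_inner_smul_left,
    inner_sub_left, real_inner_self_eq_norm_sq, hm] at hWE_perp
  rw [dist_eq_norm, dist_eq_norm, add_sub_add_right_eq_sub, add_sub_add_right_eq_sub,
    norm_sub_sq_real, norm_sub_sq_real, hm, hb, hp, real_inner_comm y, real_inner_comm z]
  linear_combination 2 * hWE_perp

theorem inner_eq_zero_of_mem_direction_affineSpan_pair {B C n v : V} (hn : ⟪C - B, n⟫ = 0)
    (hv : v ∈ line[ℝ, B, C].direction) : ⟪v, n⟫ = 0 := by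
  obtain ⟨a, rfl⟩ := mem_vectorSpan_pair_rev.mp (direction_affineSpan ℝ {B, C} ▸ hv)
  rw [vsub_eq_sub, real_inner_smul_left, hn, mul_zero]

theorem sub_center_eq_smul_of_sOppSide (hV : Module.finrank ℝ V = 2) {O B C M W E : V} {R r : ℝ}
    (hBC : B ≠ C) (hOB : dist O B = R) (hM : dist O M = R) (hOM_perp : ⟪M - O, C - B⟫ = 0)
    (hr : 0 < r) (hWE : dist W E = r) (hE : E ∈ line[ℝ, B, C])
    (hWE_perp : ⟪W - E, C - B⟫ = 0) (hside : line[ℝ, B, C].SOppSide M W) :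
    M - O = (R / r) • (E - W) := by
  have hn : ‖E - W‖ = r := by rw [← dist_eq_norm, dist_comm, hWE]
  have hnu : ⟪C - B, E - W⟫ = 0 := by
    rw [← neg_sub W E, inner_neg_right, real_inner_comm, hWE_perp, neg_zero]
  obtain ⟨c, hc⟩ := exists_eq_smul_of_inner_eq_zero hV (sub_ne_zero.mpr hBC.symm)
    (by rw [← norm_ne_zero_iff, hn]; exact hr.ne') (by rwa [real_inner_comm]) hOM_perp
  have hcR : |c| * r = R := by
    rw [← hn, ← Real.norm_eq_abs, ← norm_smul, ← hc, ← dist_eq_norm, dist_comm, hM]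
  have hM_pos : 0 < ⟪M - E, E - W⟫ :=
    hside.inner_pos_of_inner_neg hE (fun _ ↦ inner_eq_zero_of_mem_direction_affineSpan_pair hnu)
      (by rw [← neg_sub, inner_neg_left, real_inner_self_eq_norm_sq, hn]; nlinarith)
  have hEB : ⟪E - B, E - W⟫ = 0 := inner_eq_zero_of_mem_direction_affineSpan_pair hnu
    (vsub_mem_direction hE (left_mem_affineSpan_pair ℝ B C))
  have hOB_le : ⟪O - B, E - W⟫ ≤ R * r := by
    rw [← hOB, dist_eq_norm, ← hn]; exact real_inner_le_norm _ _
  have hM_eq : ⟪M - E, E - W⟫ = c * r ^ 2 + ⟪O - B, E - W⟫ := by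
    rw [show M - E = (M - O) + (O - B) - (E - B) by abel, inner_sub_left, inner_add_left, hEB, hc,
      real_inner_smul_left, real_inner_self_eq_norm_sq, hn, sub_zero]
  have hc_nonneg : 0 ≤ c := by
    by_contra! h
    rw [abs_of_neg h] at hcR
    nlinarith
  rw [hc, ← hcR, abs_of_nonneg hc_nonneg, mul_div_cancel_right₀ _ hr.ne']

theorem eq_lineMap_of_internallyTangent {O P W M E : V} {R r : ℝ} (hr : 0 < r) (hrR : r < R)
    (hWP : dist W P = r) (hOP : dist O P = R) (hWO : dist W O = R - r)
    (hMO : M - O = (R / r) • (E - W)) :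
    E = AffineMap.lineMap M P (1 - r / R) := by
  have hR : R ≠ 0 := (hr.trans hrR).ne'
  have hW : W = AffineMap.lineMap O P (1 - r / R) := eq_lineMap_of_dist_eq_mul_of_dist_eq_mul
    (by rw [dist_comm, hWO, hOP]; field_simp) (by rw [hWP, hOP]; field_simp; ring)
  have hEW : E - W = (r / R) • (M - O) := by rw [hMO, smul_smul]; field_simp; simp
  rw [← sub_add_cancel E W, hEW, hW, AffineMap.lineMap_apply_module,
    AffineMap.lineMap_apply_module]
  module

end

/-- `MB` is tangent at `B` to the circumcircle of `BEP`, hence `MB² = ME·MP`. -/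
theorem tangent_and_power (O B C W P E M : Pt) (R r : ℝ)
    (hBC : B ≠ C)
    (hOB : dist O B = R) (hOC : dist O C = R)
    (hr : 0 < r) (hrR : r < R)
    (hP₁ : dist W P = r) (hP₂ : dist O P = R) (hP₃ : dist W O = R - r)
    (hE : TangentAt W r B C E)
    (hM : dist O M = R) (hMB : dist M B = dist M C)
    (hMside : (lineTh B C).SOppSide M W) :
    (∀ (O' : Pt) (R' : ℝ), dist O' B = R' → dist O' E = R' → dist O' P = R' →
      (inner ℝ (B - O') (M - B) : ℝ) = 0) ∧
    dist M B ^ 2 = dist M E * dist M P := by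
  obtain ⟨hE, hWE, hmin⟩ := hE
  have hR : 0 < R := hr.trans hrR
  have hWE_perp : ⟪W - E, C - B⟫ = 0 := inner_sub_eq_zero_of_forall_dist_le fun t ↦ hWE ▸
    hmin _ (vadd_mem_of_mem_direction
      (direction_affineSpan ℝ {B, C} ▸ mem_vectorSpan_pair_rev.mpr ⟨t, rfl⟩) hE)
  have hOM_perp : ⟪M - O, C - B⟫ = 0 :=
    inner_vsub_vsub_of_dist_eq_of_dist_eq (c₁ := O) (p₁ := B)
      (by rw [dist_comm, hOB, dist_comm, hOC]) (by rw [dist_comm, hMB, dist_comm])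
  have hMO := sub_center_eq_smul_of_sOppSide finrank_euclideanSpace_fin hBC hOB hM hOM_perp hr
    hWE hE hWE_perp hMside
  have hEk : E = AffineMap.lineMap M P (1 - r / R) :=
    eq_lineMap_of_internallyTangent hr hrR hP₁ hP₂ hP₃ hMO
  have hMB2 : dist M B ^ 2 = (1 - r / R) * dist M P ^ 2 :=
    Sphere.dist_sq_eq_mul_dist_sq_of_inner_eq_zero (s := ⟨O, R⟩)
      (EuclideanGeometry.mem_sphere'.mpr hM) (EuclideanGeometry.mem_sphere'.mpr hOB)
      (EuclideanGeometry.mem_sphere'.mpr hP₂) hEk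
      (inner_eq_zero_of_mem_direction_affineSpan_pair (by rwa [real_inner_comm])
        (vsub_mem_direction hE (left_mem_affineSpan_pair ℝ B C)))
  refine ⟨fun O' R' hB hE' hP ↦ ?_, ?_⟩
  · have hpow : dist M O' ^ 2 - R' ^ 2 = (1 - r / R) * dist M P ^ 2 :=
      Sphere.power_eq_mul_dist_sq (s := ⟨O', R'⟩) (by simp [hr.ne', hR.ne']) hEk
        (EuclideanGeometry.mem_sphere'.mpr hE') (EuclideanGeometry.mem_sphere'.mpr hP)
    rw [← norm_add_sq_eq_norm_sq_add_norm_sq_iff_real_inner_eq_zero, ← sq, ← sq, ← sq,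
      sub_add_sub_cancel', ← dist_eq_norm, ← dist_eq_norm, ← dist_eq_norm, dist_comm B, hB]
    linarith
  · have hk : 0 ≤ 1 - r / R := by rw [sub_nonneg, div_le_one hR]; exact hrR.le
    rw [hMB2, hEk, dist_left_lineMap, Real.norm_of_nonneg hk]
    ring
end
end
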